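/- arXiv:2209.13675 — 11 statements merged into one kernel-verified Lean document; each statement's English description precedes it below -/
import Mathlib

section
/- Let p ∈ (0,1). Let U₀, U₁ and I be mutually independent random variables, where U₀ and U₁ are uniformly distributed on [0,1] and I is Bernoulli distributed with success probability p. Then the random variable U₀^{1-p} · U₁^{I} is uniformly distributed on [0,1]. -/
/-!
Conditioning on `I`, the law of `X = U₀ ^ (1 - p) * U₁ ^ I` is the mixture
`(1 - p) • law (U₀ ^ (1 - p)) + p • law (U₀ ^ (1 - p) * U₁)`. Fix `t ∈ [0, 1]` and put
`s = t ^ (1 - p)⁻¹`. The first component has CDF `s` at `t`; for the second, the section at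
`U₀ = x` has probability `min (t / x ^ (1 - p)) 1`, which is `1` for `x ≤ s` and integrates to
`(t - s) / p` over `(s, 1]`. Hence `P (X ≤ t) = (1 - p) s + p (s + (t - s) / p) = t`.
-/

open MeasureTheory ProbabilityTheory Set

lemma ProbabilityTheory.IndepFun.map_eq_add_of_zero_or_one {Ω β γ : Type*} [MeasurableSpace Ω]
    [MeasurableSpace β] [MeasurableSpace γ] {P : Measure Ω} {V : Ω → β} {I : Ω → ℝ}
    (hVI : IndepFun V I P) (hV : Measurable V) (hI : Measurable I)
    (hI01 : ∀ ω, I ω = 0 ∨ I ω = 1) {f : β → ℝ → γ} (hf : Measurable (Function.uncurry f)) :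
    P.map (fun ω => f (V ω) (I ω)) =
      P {ω | I ω = 0} • (P.map V).map (f · 0) + P {ω | I ω = 1} • (P.map V).map (f · 1) := by
  have hf₀ : Measurable (f · 0) := hf.comp (measurable_id.prodMk measurable_const)
  have hf₁ : Measurable (f · 1) := hf.comp (measurable_id.prodMk measurable_const)
  ext s hs
  have hsplit : (fun ω => f (V ω) (I ω)) ⁻¹' s =
      (V ⁻¹' ((f · 0) ⁻¹' s) ∩ I ⁻¹' {0}) ∪ (V ⁻¹' ((f · 1) ⁻¹' s) ∩ I ⁻¹' {1}) := by
    ext ω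
    rcases hI01 ω with h | h <;> simp [h]
  have hdisj : Disjoint (V ⁻¹' ((f · 0) ⁻¹' s) ∩ I ⁻¹' {0})
      (V ⁻¹' ((f · 1) ⁻¹' s) ∩ I ⁻¹' {1}) :=
    (disjoint_singleton.2 zero_ne_one).preimage I |>.mono inter_subset_right inter_subset_right
  have hfVI : Measurable fun ω => f (V ω) (I ω) := hf.comp (hV.prodMk hI)
  rw [Measure.map_apply hfVI hs, hsplit,
    measure_union hdisj ((hV (hf₁ hs)).inter (hI (measurableSet_singleton 1))),
    hVI.measure_inter_preimage_eq_mul _ _ (hf₀ hs) (measurableSet_singleton 0),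
    hVI.measure_inter_preimage_eq_mul _ _ (hf₁ hs) (measurableSet_singleton 1),
    Measure.add_apply, Measure.smul_apply, Measure.smul_apply, Measure.map_apply hf₀ hs,
    Measure.map_apply hf₁ hs, Measure.map_apply hV (hf₀ hs), Measure.map_apply hV (hf₁ hs),
    smul_eq_mul, smul_eq_mul, mul_comm (P {ω | I ω = 0}), mul_comm (P {ω | I ω = 1})]
  rfl

lemma MeasureTheory.Measure.ext_of_Iic_of_mem_Icc {μ ν : Measure ℝ} [IsProbabilityMeasure μ]
    [IsProbabilityMeasure ν] {a b : ℝ} (hab : a ≤ b) (ha : ν (Iic a) = 0) (hb : ν (Iic b) = 1)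
    (h : ∀ t ∈ Icc a b, μ (Iic t) = ν (Iic t)) : μ = ν := by
  refine Measure.ext_of_Iic μ ν fun t => ?_
  rcases lt_or_ge t a with hta | hat
  · have hμa : μ (Iic a) = 0 := (h a ⟨le_rfl, hab⟩).trans ha
    rw [measure_mono_null (Iic_subset_Iic.2 hta.le) hμa,
      measure_mono_null (Iic_subset_Iic.2 hta.le) ha]
  rcases le_or_gt t b with htb | hbt
  · exact h t ⟨hat, htb⟩
  · have hμb : μ (Iic b) = 1 := (h b ⟨hab, le_rfl⟩).trans hb
    have hone : ∀ ρ : Measure ℝ, [IsProbabilityMeasure ρ] → ρ (Iic b) = 1 → ρ (Iic t) = 1 :=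
      fun ρ _ hρ => le_antisymm prob_le_one (hρ ▸ measure_mono (Iic_subset_Iic.2 hbt.le))
    rw [hone μ hμb, hone ν hb]

lemma mul_rpow_inv_rpow_one_sub {a t : ℝ} (ha : a ≠ 0) (ht : 0 ≤ t) :
    t * (t ^ a⁻¹) ^ (1 - a) = t ^ a⁻¹ := by
  rcases ht.eq_or_lt with rfl | ht
  · simp [Real.zero_rpow (inv_ne_zero ha)]
  · rw [← Real.rpow_mul ht.le]
    nth_rw 1 [← Real.rpow_one t]
    rw [← Real.rpow_add ht]
    congr 1
    field_simp
    ring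

section Uniform

local notation "𝕌" => volume.restrict (Icc (0 : ℝ) 1)

instance : IsProbabilityMeasure 𝕌 := ⟨by simp⟩

lemma uniform_Iic (b : ℝ) : 𝕌 (Iic b) = ENNReal.ofReal (min b 1) := by
  have : Iic b ∩ Icc 0 1 = Icc 0 (min b 1) := by
    ext x
    simp only [mem_inter_iff, mem_Iic, mem_Icc, le_min_iff]
    tauto
  rw [Measure.restrict_apply measurableSet_Iic, this, Real.volume_Icc, sub_zero]

lemma uniform_rpow_le {a t : ℝ} (ha : 0 < a) (ht0 : 0 ≤ t) (ht1 : t ≤ 1) :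
    𝕌 {x | x ^ a ≤ t} = ENNReal.ofReal (t ^ a⁻¹) := by
  have : {x : ℝ | x ^ a ≤ t} ∩ Icc 0 1 = Iic (t ^ a⁻¹) ∩ Icc 0 1 := by
    ext x
    simp only [mem_inter_iff, mem_ofPred_eq, mem_Iic, and_congr_left_iff]
    exact fun hx => (Real.le_rpow_inv_iff_of_pos hx.1 ht0 ha).symm
  rw [Measure.restrict_apply (measurableSet_le (by fun_prop) measurable_const), this,
    ← Measure.restrict_apply measurableSet_Iic, uniform_Iic,
    min_eq_left (Real.rpow_le_one ht0 ht1 (inv_nonneg.2 ha.le))]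

lemma uniform_mul_le {c t : ℝ} (hc : 0 < c) :
    𝕌 {y | c * y ≤ t} = ENNReal.ofReal (min (t / c) 1) := by
  have : {y : ℝ | c * y ≤ t} = Iic (t / c) := by
    ext y
    exact (le_div_iff₀' hc).symm
  rw [this, uniform_Iic]

lemma lintegral_Ioc_min_div_rpow {a t : ℝ} (ha0 : 0 < a) (ha1 : a < 1) (ht0 : 0 ≤ t)
    (ht1 : t ≤ 1) :
    ∫⁻ x in Ioc 0 1, ENNReal.ofReal (min (t / x ^ a) 1) =
      ENNReal.ofReal (t ^ a⁻¹ + (t - t ^ a⁻¹) / (1 - a)) := by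
  set s := t ^ a⁻¹ with hs
  have hs0 : 0 ≤ s := Real.rpow_nonneg ht0 _
  have hs1 : s ≤ 1 := Real.rpow_le_one ht0 ht1 (inv_nonneg.2 ha0.le)
  have hst : s ≤ t := Real.rpow_le_self_of_le_one ht0 ht1 ((one_le_inv₀ ha0).2 ha1.le)
  have h_left : ∫⁻ x in Ioc 0 s, ENNReal.ofReal (min (t / x ^ a) 1) = ENNReal.ofReal s := by
    rw [setLIntegral_congr_fun measurableSet_Ioc (g := fun _ => 1) fun x hx => ?_,
      setLIntegral_const, one_mul, Real.volume_Ioc, sub_zero]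
    have hxt : x ^ a ≤ t := (Real.le_rpow_inv_iff_of_pos hx.1.le ht0 ha0).1 hx.2
    rw [min_eq_right ((one_le_div (Real.rpow_pos_of_pos hx.1 a)).2 hxt), ENNReal.ofReal_one]
  have h_right : ∫⁻ x in Ioc s 1, ENNReal.ofReal (min (t / x ^ a) 1) =
      ENNReal.ofReal (∫ x in s..1, t * x ^ (-a)) := by
    have hint : IntegrableOn (fun x : ℝ => t * x ^ (-a)) (Ioc s 1) :=
      (intervalIntegrable_iff_integrableOn_Ioc_of_le hs1).1
        ((intervalIntegral.intervalIntegrable_rpow' (by linarith)).const_mul t)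
    have hnonneg : ∀ x ∈ Ioc s 1, 0 ≤ t * x ^ (-a) :=
      fun x hx => mul_nonneg ht0 (Real.rpow_nonneg (hs0.trans hx.1.le) _)
    rw [intervalIntegral.integral_of_le hs1, ofReal_integral_eq_lintegral_ofReal hint
      ((ae_restrict_iff' measurableSet_Ioc).2 (ae_of_all _ hnonneg))]
    refine setLIntegral_congr_fun measurableSet_Ioc fun x hx => ?_
    have hx0 : 0 < x := hs0.trans_lt hx.1
    have htx : t < x ^ a := (Real.rpow_inv_lt_iff_of_pos ht0 hx0.le ha0).1 hx.1
    rw [min_eq_left ((div_le_one (Real.rpow_pos_of_pos hx0 a)).2 htx.le), Real.rpow_neg hx0.le,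
      div_eq_mul_inv]
  have h_integral : ∫ x in s..1, t * x ^ (-a) = (t - s) / (1 - a) := by
    rw [intervalIntegral.integral_const_mul, integral_rpow (Or.inl (by linarith)),
      neg_add_eq_sub, Real.one_rpow, mul_div_assoc', mul_sub, mul_one,
      mul_rpow_inv_rpow_one_sub ha0.ne' ht0]
  rw [← Ioc_union_Ioc_eq_Ioc hs0 hs1,
    lintegral_union measurableSet_Ioc (Ioc_disjoint_Ioc_of_le le_rfl), h_left, h_right, h_integral,
    ← ENNReal.ofReal_add hs0 (div_nonneg (sub_nonneg.2 hst) (sub_pos.2 ha1).le)]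

lemma uniform_prod_rpow_mul_le {a t : ℝ} (ha0 : 0 < a) (ha1 : a < 1) (ht0 : 0 ≤ t)
    (ht1 : t ≤ 1) :
    (Measure.prod 𝕌 𝕌) {z : ℝ × ℝ | z.1 ^ a * z.2 ≤ t} =
      ENNReal.ofReal (t ^ a⁻¹ + (t - t ^ a⁻¹) / (1 - a)) := by
  rw [Measure.prod_apply (measurableSet_le (by fun_prop) measurable_const),
    ← setLIntegral_congr Ioc_ae_eq_Icc, ← lintegral_Ioc_min_div_rpow ha0 ha1 ht0 ht1]
  exact setLIntegral_congr_fun measurableSet_Ioc fun x hx =>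
    uniform_mul_le (Real.rpow_pos_of_pos hx.1 a)

lemma coxian_mixture_eq_uniform {p : ℝ} (hp0 : 0 < p) (hp1 : p < 1) :
    ENNReal.ofReal (1 - p) • (Measure.prod 𝕌 𝕌).map (fun z => z.1 ^ (1 - p)) +
      ENNReal.ofReal p • (Measure.prod 𝕌 𝕌).map (fun z => z.1 ^ (1 - p) * z.2) = 𝕌 := by
  have hf₀ : Measurable fun z : ℝ × ℝ => z.1 ^ (1 - p) := by fun_prop
  have hf₁ : Measurable fun z : ℝ × ℝ => z.1 ^ (1 - p) * z.2 := by fun_prop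
  have hq0 : 0 < 1 - p := sub_pos.2 hp1
  have : IsProbabilityMeasure (ENNReal.ofReal (1 - p) •
      (Measure.prod 𝕌 𝕌).map (fun z => z.1 ^ (1 - p)) +
      ENNReal.ofReal p • (Measure.prod 𝕌 𝕌).map (fun z => z.1 ^ (1 - p) * z.2)) := by
    constructor
    simp [Measure.map_apply hf₀ MeasurableSet.univ, Measure.map_apply hf₁ MeasurableSet.univ,
      ← ENNReal.ofReal_add hq0.le hp0.le]
  refine Measure.ext_of_Iic_of_mem_Icc zero_le_one (by rw [uniform_Iic]; simp)
    (by rw [uniform_Iic]; simp) fun t ⟨ht0, ht1⟩ => ?_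
  have hfst : (fun z : ℝ × ℝ => z.1 ^ (1 - p)) ⁻¹' Iic t = {x | x ^ (1 - p) ≤ t} ×ˢ univ := by
    ext; simp
  have hprod : (fun z : ℝ × ℝ => z.1 ^ (1 - p) * z.2) ⁻¹' Iic t =
      {z | z.1 ^ (1 - p) * z.2 ≤ t} :=
    rfl
  set s := t ^ (1 - p)⁻¹
  have hs0 : 0 ≤ s := Real.rpow_nonneg ht0 _
  have hst : s ≤ t :=
    Real.rpow_le_self_of_le_one ht0 ht1 ((one_le_inv₀ hq0).2 (sub_le_self 1 hp0.le))
  rw [Measure.add_apply, Measure.smul_apply, Measure.smul_apply,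
    Measure.map_apply hf₀ measurableSet_Iic, Measure.map_apply hf₁ measurableSet_Iic, hfst, hprod,
    Measure.prod_prod, measure_univ, mul_one, uniform_rpow_le hq0 ht0 ht1,
    uniform_prod_rpow_mul_le hq0 (sub_lt_self 1 hp0) ht0 ht1, uniform_Iic, min_eq_left ht1,
    sub_sub_cancel, smul_eq_mul, smul_eq_mul, ← ENNReal.ofReal_mul hq0.le,
    ← ENNReal.ofReal_mul hp0.le, ← ENNReal.ofReal_add (mul_nonneg hq0.le hs0)
      (mul_nonneg hp0.le (add_nonneg hs0 (div_nonneg (sub_nonneg.2 hst) hp0.le)))]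
  congr 1
  field_simp
  ring

end Uniform

/-- Let `p ∈ (0,1)`, and let `U₀`, `U₁`, `I` be mutually independent random variables where
`U₀` and `U₁` are uniform on `[0,1]` and `I` is Bernoulli with success probability `p`.
Then `U₀^(1-p) * U₁^I` is uniform on `[0,1]`. -/
theorem uniform_of_coxian_representation
    {Ω : Type*} [MeasurableSpace Ω] (P : Measure Ω) [IsProbabilityMeasure P]
    (p : ℝ) (hp : p ∈ Ioo (0 : ℝ) 1)
    (U₀ U₁ I : Ω → ℝ)
    (hU₀ : Measurable U₀) (hU₁ : Measurable U₁) (hI : Measurable I)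
    (hindep : iIndepFun (m := fun _ : Fin 3 => (inferInstance : MeasurableSpace ℝ))
      ![U₀, U₁, I] P)
    (hU₀law : P.map U₀ = volume.restrict (Icc (0 : ℝ) 1))
    (hU₁law : P.map U₁ = volume.restrict (Icc (0 : ℝ) 1))
    (hI01 : ∀ ω, I ω = 0 ∨ I ω = 1)
    (hIp : P {ω | I ω = 1} = ENNReal.ofReal p) :
    P.map (fun ω => U₀ ω ^ (1 - p) * U₁ ω ^ I ω) = volume.restrict (Icc (0 : ℝ) 1) := by
  obtain ⟨hp0, hp1⟩ := hp
  have hU₀U₁ : IndepFun U₀ U₁ P := by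
    simpa using hindep.indepFun (show (0 : Fin 3) ≠ 1 by decide)
  have hpairI : IndepFun (fun ω => (U₀ ω, U₁ ω)) I P := by
    have hmeas : ∀ i, Measurable (![U₀, U₁, I] i) := fun i => by fin_cases i <;> assumption
    simpa using hindep.indepFun_prodMk hmeas 0 1 2 (by decide) (by decide)
  have hpair_law : P.map (fun ω => (U₀ ω, U₁ ω)) =
      (volume.restrict (Icc (0 : ℝ) 1)).prod (volume.restrict (Icc (0 : ℝ) 1)) := by
    rw [(indepFun_iff_map_prod_eq_prod_map_map hU₀.aemeasurable hU₁.aemeasurable).1 hU₀U₁,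
      hU₀law, hU₁law]
  have hI0 : P {ω | I ω = 0} = ENNReal.ofReal (1 - p) := by
    have : {ω | I ω = 0} = {ω | I ω = 1}ᶜ := by
      ext ω
      rcases hI01 ω with h | h <;> simp [h]
    rw [this, prob_compl_eq_one_sub (s := {ω | I ω = 1}) (hI (measurableSet_singleton 1)), hIp,
      ENNReal.ofReal_sub _ hp0.le, ENNReal.ofReal_one]
  have hf : Measurable (Function.uncurry fun (z : ℝ × ℝ) (i : ℝ) => z.1 ^ (1 - p) * z.2 ^ i) := by
    fun_prop
  rw [hpairI.map_eq_add_of_zero_or_one (hU₀.prodMk hU₁) hI hI01 hf, hpair_law, hI0, hIp]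
  simpa only [Real.rpow_zero, Real.rpow_one, mul_one] using coxian_mixture_eq_uniform hp0 hp1
end

section
/- Let p ∈ (0,1) and let U₀ and U₁ be independent random variables uniformly distributed on [0,1]. Then for every u ∈ [0,1], P(U₀^{1-p}·U₁ ≤ u) = u/p - ((1-p)/p)·u^{1/(1-p)}. -/
open MeasureTheory ProbabilityTheory Set

/-- Let `p ∈ (0,1)` and let `U₀`, `U₁` be independent random variables, uniform on `[0,1]`.
Then for every `u ∈ [0,1]`, `P(U₀^(1-p) * U₁ ≤ u) = u/p - ((1-p)/p) * u^(1/(1-p))`. -/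
theorem cdf_of_coxian_uniform_product
    {Ω : Type*} [MeasurableSpace Ω] (P : Measure Ω) [IsProbabilityMeasure P]
    (p : ℝ) (hp : p ∈ Ioo (0 : ℝ) 1)
    (U₀ U₁ : Ω → ℝ)
    (hU₀ : Measurable U₀) (hU₁ : Measurable U₁)
    (hindep : IndepFun U₀ U₁ P)
    (hU₀law : P.map U₀ = volume.restrict (Icc (0 : ℝ) 1))
    (hU₁law : P.map U₁ = volume.restrict (Icc (0 : ℝ) 1)) :
    ∀ u ∈ Icc (0 : ℝ) 1,
      P {ω | U₀ ω ^ (1 - p) * U₁ ω ≤ u}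
        = ENNReal.ofReal (u / p - ((1 - p) / p) * u ^ (1 - p)⁻¹) := by
  intro u hu
  obtain ⟨hp0, hp1⟩ := hp
  obtain ⟨hu0, hu1⟩ := hu
  set c : ℝ := 1 - p with hc
  have hc0 : 0 < c := by simp only [hc]; linarith
  have hc1 : c < 1 := by simp only [hc]; linarith
  set μ : Measure ℝ := volume.restrict (Icc (0 : ℝ) 1) with hμ
  set a : ℝ := u ^ c⁻¹ with ha
  have ha0 : 0 ≤ a := Real.rpow_nonneg hu0 _
  have ha1 : a ≤ 1 := Real.rpow_le_one hu0 hu1 (by positivity)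
  have hac : a ^ c = u := Real.rpow_inv_rpow hu0 hc0.ne'
  -- the set
  set S : Set (ℝ × ℝ) := {q : ℝ × ℝ | q.1 ^ c * q.2 ≤ u} with hS
  have hcont : Continuous fun q : ℝ × ℝ => q.1 ^ c * q.2 :=
    ((Real.continuous_rpow_const hc0.le).comp continuous_fst).mul continuous_snd
  have hSm : MeasurableSet S := measurableSet_le hcont.measurable measurable_const
  -- step 1 : joint law
  have hmap : P.map (fun ω => (U₀ ω, U₁ ω)) = μ.prod μ := by
    rw [(indepFun_iff_map_prod_eq_prod_map_map hU₀.aemeasurable hU₁.aemeasurable).mp hindep,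
      hU₀law, hU₁law]
  have h1 : P {ω | U₀ ω ^ c * U₁ ω ≤ u} = (μ.prod μ) S := by
    have : {ω | U₀ ω ^ c * U₁ ω ≤ u} = (fun ω => (U₀ ω, U₁ ω)) ⁻¹' S := rfl
    rw [this, ← hmap, Measure.map_apply (hU₀.prodMk hU₁) hSm]
  -- step 2 : Fubini
  have h2 : (μ.prod μ) S = ∫⁻ x, μ (Prod.mk x ⁻¹' S) ∂μ := Measure.prod_apply hSm
  -- step 3: slice measure a.e.
  set f : ℝ → ℝ := fun x => min 1 (u / x ^ c) with hf
  have hslice : ∀ x ∈ Ioc (0:ℝ) 1, μ (Prod.mk x ⁻¹' S) = ENNReal.ofReal (f x) := by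
    intro x hx
    have hxc : 0 < x ^ c := Real.rpow_pos_of_pos hx.1 _
    have hpre : Prod.mk x ⁻¹' S = Iic (u / x ^ c) := by
      ext y
      simp only [hS, mem_preimage, mem_setOf_eq, mem_Iic]
      rw [le_div_iff₀ hxc, mul_comm]
    rw [hpre, hμ, Measure.restrict_apply measurableSet_Iic]
    have : Iic (u / x ^ c) ∩ Icc (0:ℝ) 1 = Icc 0 (min 1 (u / x ^ c)) := by
      ext y
      simp only [mem_inter_iff, mem_Iic, mem_Icc, le_min_iff]
      tauto
    rw [this, Real.volume_Icc, sub_zero]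
  have haeIoc : ∀ᵐ x ∂μ, x ∈ Ioc (0:ℝ) 1 := by
    rw [hμ, ae_restrict_iff' measurableSet_Icc]
    filter_upwards [(ae_iff (p := fun x : ℝ => x ≠ 0)).mpr (by simp)] with x hx hxI
    exact ⟨lt_of_le_of_ne hxI.1 (Ne.symm hx), hxI.2⟩
  have h3 : ∫⁻ x, μ (Prod.mk x ⁻¹' S) ∂μ = ∫⁻ x, ENNReal.ofReal (f x) ∂μ := by
    apply lintegral_congr_ae
    filter_upwards [haeIoc] with x hx
    exact hslice x hx
  -- step 4: lintegral to integral
  have hfmeas : Measurable f :=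
    measurable_const.min (measurable_const.div ((Real.continuous_rpow_const hc0.le).measurable))
  have hfnn : ∀ x ∈ Ioc (0:ℝ) 1, 0 ≤ f x := fun x hx =>
    le_min zero_le_one (div_nonneg hu0 (Real.rpow_nonneg hx.1.le _))
  have hint : Integrable f μ := by
    refine (integrable_const (1:ℝ)).mono' hfmeas.aestronglyMeasurable ?_
    filter_upwards [haeIoc] with x hx
    rw [Real.norm_eq_abs, abs_of_nonneg (hfnn x hx)]
    exact min_le_left _ _
  have h4 : ∫⁻ x, ENNReal.ofReal (f x) ∂μ = ENNReal.ofReal (∫ x, f x ∂μ) := by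
    refine (ofReal_integral_eq_lintegral_ofReal hint ?_).symm
    filter_upwards [haeIoc] with x hx
    exact hfnn x hx
  -- step 5: compute the real integral
  have h5 : ∫ x, f x ∂μ = u / p - (c / p) * a := by
    have hIoc : ∫ x, f x ∂μ = ∫ x in (0:ℝ)..1, f x := by
      rw [hμ, integral_Icc_eq_integral_Ioc, ← intervalIntegral.integral_of_le zero_le_one]
    have hIntOn : IntegrableOn f (Icc (0:ℝ) 1) := hint
    have hii1 : IntervalIntegrable f volume 0 a := by
      rw [intervalIntegrable_iff_integrableOn_Ioc_of_le ha0]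
      exact hIntOn.mono_set (Ioc_subset_Icc_self.trans (Icc_subset_Icc le_rfl ha1))
    have hii2 : IntervalIntegrable f volume a 1 := by
      rw [intervalIntegrable_iff_integrableOn_Ioc_of_le ha1]
      exact hIntOn.mono_set (Ioc_subset_Icc_self.trans (Icc_subset_Icc ha0 le_rfl))
    have hsplit : (∫ x in (0:ℝ)..a, f x) + ∫ x in a..(1:ℝ), f x = ∫ x in (0:ℝ)..1, f x :=
      intervalIntegral.integral_add_adjacent_intervals hii1 hii2
    have hpiece1 : ∫ x in (0:ℝ)..a, f x = a := by
      rw [intervalIntegral.integral_congr_ae (g := fun _ => (1:ℝ)) ?_,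
        intervalIntegral.integral_const, smul_eq_mul, sub_zero, mul_one]
      filter_upwards with x hx
      rw [uIoc_of_le ha0] at hx
      have hxc : x ^ c ≤ u := by
        calc x ^ c ≤ a ^ c := Real.rpow_le_rpow hx.1.le hx.2 hc0.le
        _ = u := hac
      have hxc0 : 0 < x ^ c := Real.rpow_pos_of_pos hx.1 _
      simp only [hf]
      rw [min_eq_left]
      rw [le_div_iff₀ hxc0, one_mul]
      exact hxc
    have hpiece2 : ∫ x in a..(1:ℝ), f x = u * ((1 - a ^ p) / p) := by
      have heq : ∫ x in a..(1:ℝ), f x = ∫ x in a..(1:ℝ), u * x ^ (-c) := by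
        apply intervalIntegral.integral_congr_ae
        filter_upwards with x hx
        rw [uIoc_of_le ha1] at hx
        have hx0 : 0 < x := lt_of_le_of_lt ha0 hx.1
        have hxc0 : 0 < x ^ c := Real.rpow_pos_of_pos hx0 _
        have hxc : u ≤ x ^ c := by
          calc u = a ^ c := hac.symm
          _ ≤ x ^ c := Real.rpow_le_rpow ha0 hx.1.le hc0.le
        simp only [hf]
        rw [min_eq_right (by rw [div_le_one hxc0]; exact hxc),
          Real.rpow_neg hx0.le, div_eq_mul_inv]
      rw [heq, intervalIntegral.integral_const_mul,
        integral_rpow (Or.inl (by linarith : (-1:ℝ) < -c))]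
      have hcp : -c + 1 = p := by rw [hc]; ring
      rw [hcp, Real.one_rpow]
    have hap : u * a ^ p = a := by
      have h1cp : (1:ℝ) + c⁻¹ * p = c⁻¹ := by
        field_simp
        rw [hc]; ring
      calc u * a ^ p = u ^ (1:ℝ) * u ^ (c⁻¹ * p) := by
            rw [Real.rpow_one, ha, ← Real.rpow_mul hu0]
        _ = u ^ ((1:ℝ) + c⁻¹ * p) := (Real.rpow_add' hu0 (by positivity)).symm
        _ = a := by rw [h1cp, ha]
    rw [hIoc, ← hsplit, hpiece1, hpiece2]
    rw [hc]
    field_simp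
    linear_combination -hap
  rw [h1, h2, h3, h4, h5]
end

section
/- Fix d ≥ 2, p = (p₁,…,p_d) ∈ (0,1)^d, and let f be a probability mass function on {0,1}^d whose margins satisfy Σ_{i : i_m = 1} f(i) = p_m for each m. For each nonempty subset S ⊆ {1,…,d} define ν_S = Σ_{i∈{0,1}^d} f(i)·Π_{m∈S} (i_m - p_m)/p_m. Then for all u ∈ [0,1]^d, Σ_{i∈{0,1}^d} f(i)·Π_{m=1}^{d} ( u_m^{1/(1-p_m)} - i_m( u_m^{1/(1-p_m)} - u_m )/p_m ) = ( Π_{m=1}^d u_m )·( 1 + Σ_{∅≠S⊆{1,…,d}} ν_S · Π_{m∈S} ( 1 - u_m^{p_m/(1-p_m)} ) ). -/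
open MeasureTheory ProbabilityTheory Set

/-- The real value (`0` or `1`) of a Bernoulli outcome. -/
noncomputable def bval (b : Bool) : ℝ := if b then 1 else 0

/-!
Write `q = p/(1-p)`, so that `1/(1-p) = 1 + q` and `u^{1/(1-p)} = u · u^q`. Then each factor of
the copula is affine in `i_m`, namely `u (1 + (i_m - p)/p · (1 - u^q))`, and expanding the
product over `m` as a sum over subsets `S` and exchanging it with the sum over `i` produces the
mixed moments `ν_S`; the term `S = ∅` is the total mass `1`.
-/

theorem rpow_inv_one_sub_sub_mul_eq {p u : ℝ} (hp₀ : p ≠ 0) (hp₁ : p ≠ 1) (hu : 0 ≤ u) (x : ℝ) :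
    u ^ (1 - p)⁻¹ - x * ((u ^ (1 - p)⁻¹ - u) / p)
      = u * (1 + (x - p) / p * (1 - u ^ (p / (1 - p)))) := by
  have h1p : 1 - p ≠ 0 := sub_ne_zero.mpr hp₁.symm
  have hexp : (1 - p)⁻¹ = 1 + p / (1 - p) := by field_simp; ring
  have hsplit : u ^ (1 - p)⁻¹ = u * u ^ (p / (1 - p)) := by
    rw [hexp, Real.rpow_add' hu (by rw [← hexp]; exact inv_ne_zero h1p), Real.rpow_one]
  rw [hsplit]
  field_simp
  ring

theorem Finset.sum_powerset_eq_add_sum_filter_nonempty {ι M : Type*} [AddCommMonoid M]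
    (s : Finset ι) (g : Finset ι → M) :
    ∑ t ∈ s.powerset, g t = g ∅ + ∑ t ∈ s.powerset.filter Finset.Nonempty, g t := by
  classical
  have hsplit : s.powerset = insert ∅ (s.powerset.filter Finset.Nonempty) := by
    ext t
    simp only [Finset.mem_insert, Finset.mem_filter, Finset.mem_powerset]
    rcases t.eq_empty_or_nonempty with rfl | ht
    · simp
    · simp [ht, ht.ne_empty]
  nth_rw 1 [hsplit]
  rw [Finset.sum_insert (by simp)]

theorem Finset.sum_mul_prod_one_add_mul {α ι R : Type*} [Fintype ι] [CommSemiring R]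
    (s : Finset α) (f : α → R) (a : α → ι → R) (t : ι → R) :
    ∑ i ∈ s, f i * ∏ m, (1 + a i m * t m)
      = ∑ S ∈ Finset.univ.powerset, (∑ i ∈ s, f i * ∏ m ∈ S, a i m) * ∏ m ∈ S, t m := by
  simp only [Finset.prod_one_add, Finset.mul_sum, Finset.prod_mul_distrib, Finset.sum_mul]
  rw [Finset.sum_comm]
  simp only [mul_assoc]

theorem gfgm_natural_representation_general
    (d : ℕ) (p : Fin d → ℝ) (hp : ∀ m, p m ∈ Ioo (0 : ℝ) 1)
    (f : (Fin d → Bool) → ℝ) (hf1 : ∑ i : Fin d → Bool, f i = 1)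
    (u : Fin d → ℝ) (hu : ∀ m, u m ∈ Icc (0 : ℝ) 1) :
    ∑ i : Fin d → Bool,
        f i * ∏ m, (u m ^ (1 - p m)⁻¹ - bval (i m) * ((u m ^ (1 - p m)⁻¹ - u m) / p m))
      = (∏ m, u m) *
          (1 + ∑ S ∈ Finset.univ.powerset.filter Finset.Nonempty,
            (∑ i : Fin d → Bool, f i * ∏ m ∈ S, (bval (i m) - p m) / p m) *
              ∏ m ∈ S, (1 - u m ^ (p m / (1 - p m)))) := by
  have hfactor : ∀ i : Fin d → Bool,
      ∏ m, (u m ^ (1 - p m)⁻¹ - bval (i m) * ((u m ^ (1 - p m)⁻¹ - u m) / p m))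
        = (∏ m, u m) * ∏ m, (1 + (bval (i m) - p m) / p m * (1 - u m ^ (p m / (1 - p m)))) := by
    intro i
    rw [← Finset.prod_mul_distrib]
    exact Finset.prod_congr rfl fun m _ =>
      rpow_inv_one_sub_sub_mul_eq (hp m).1.ne' (hp m).2.ne (hu m).1 _
  simp only [hfactor, mul_left_comm (f _), ← Finset.mul_sum]
  rw [Finset.sum_mul_prod_one_add_mul, Finset.sum_powerset_eq_add_sum_filter_nonempty]
  simp only [Finset.prod_empty, mul_one, hf1]

/-- Fix `d ≥ 2`, `p ∈ (0,1)^d` and a pmf `f` on `{0,1}^d` with margins `p`.  For nonempty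
`S ⊆ {1,…,d}` let `ν_S = Σ_i f(i) Π_{m∈S} (i_m - p_m)/p_m`.  Then for `u ∈ [0,1]^d` the
GFGM copula `Σ_i f(i) Π_m (u_m^{1/(1-p_m)} - i_m (u_m^{1/(1-p_m)} - u_m)/p_m)` equals its
natural FGM-type representation
`(Π_m u_m)(1 + Σ_{∅≠S} ν_S Π_{m∈S} (1 - u_m^{p_m/(1-p_m)}))`. -/
theorem gfgm_natural_representation
    (d : ℕ) (hd : 2 ≤ d) (p : Fin d → ℝ) (hp : ∀ m, p m ∈ Ioo (0 : ℝ) 1)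
    (f : (Fin d → Bool) → ℝ) (hf0 : ∀ i, 0 ≤ f i) (hf1 : ∑ i : Fin d → Bool, f i = 1)
    (hmarg : ∀ m, ∑ i ∈ Finset.univ.filter (fun i : Fin d → Bool => i m = true), f i = p m)
    (u : Fin d → ℝ) (hu : ∀ m, u m ∈ Icc (0 : ℝ) 1) :
    ∑ i : Fin d → Bool,
        f i * ∏ m, (u m ^ (1 - p m)⁻¹ - bval (i m) * ((u m ^ (1 - p m)⁻¹ - u m) / p m))
      = (∏ m, u m) *
          (1 + ∑ S ∈ Finset.univ.powerset.filter Finset.Nonempty,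
            (∑ i : Fin d → Bool, f i * ∏ m ∈ S, (bval (i m) - p m) / p m) *
              ∏ m ∈ S, (1 - u m ^ (p m / (1 - p m)))) :=
  gfgm_natural_representation_general d p hp f hf1 u hu
end

section
/- Fix d ≥ 2 and p = (p₁,…,p_d) ∈ (0,1)^d. Let I and I' be {0,1}^d-valued random vectors, both with P(I_m = 1) = P(I'_m = 1) = p_m for each m, and suppose that E[φ(I)] ≤ E[φ(I')] for every bounded measurable supermodular function φ: ℝ^d → ℝ. Construct U from I and U' from I' via the GFGM representation U_m = U₀,ₘ^{1-p_m}·U₁,ₘ^{I_m} (respectively with I'), where U₀, U₁ are vectors of i.i.d. standard uniform random variables on [0,1] independent of the Bernoulli vector. Then E[φ(U)] ≤ E[φ(U')] for every bounded measurable supermodular function φ: ℝ^d → ℝ. -/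
/-! Conditionally on the uniform vector `v = (U₀, U₁)`, which is independent of `I` and has the
same law in both models, `U` is the image of the real vector `bval ∘ I` under
`x ↦ (v₀ₘ^(1-pₘ) * v₁ₘ^xₘ)ₘ`. Almost surely every coordinate of `v` lies in `(0, 1]`, so each
coordinate of this map is antitone in `xₘ` and composing it with a bounded measurable supermodular
`φ` gives another such function. The hypothesis therefore compares the conditional expectations
given `v`, and integrating over the common law of `v` compares the unconditional ones. -/

open MeasureTheory ProbabilityTheory Set

def Supermodular {β γ : Type*} [Lattice β] [Add γ] [LE γ] (φ : β → γ) : Prop :=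
  ∀ x y, φ x + φ y ≤ φ (x ⊔ y) + φ (x ⊓ y)

theorem Supermodular.comp_antitone {ι α β γ : Type*} [LinearOrder α] [LinearOrder β]
    [AddCommMagma γ] [LE γ] {φ : (ι → β) → γ} (hφ : Supermodular φ) {F : ι → α → β}
    (hF : ∀ i, Antitone (F i)) : Supermodular fun x : ι → α => φ fun i => F i (x i) := by
  intro x y
  have hsup : (fun i => F i ((x ⊔ y) i)) = (fun i => F i (x i)) ⊓ fun i => F i (y i) :=
    funext fun i => (hF i).map_max
  have hinf : (fun i => F i ((x ⊓ y) i)) = (fun i => F i (x i)) ⊔ fun i => F i (y i) :=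
    funext fun i => (hF i).map_min
  simp only [hsup, hinf, add_comm (φ (_ ⊓ _))]
  exact hφ _ _

section GFGM

variable {ι : Type*}

/-- `v (.inl m)` and `v (.inr m)` play the roles of `U₀ₘ` and `U₁ₘ`. -/
noncomputable def gfgmMap (p : ι → ℝ) (v : ι ⊕ ι → ℝ) (x : ι → ℝ) : ι → ℝ :=
  fun m => v (.inl m) ^ (1 - p m) * v (.inr m) ^ x m

theorem measurable_gfgmMap_uncurry [Countable ι] (p : ι → ℝ) :
    Measurable fun q : (ι ⊕ ι → ℝ) × (ι → ℝ) => gfgmMap p q.1 q.2 := by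
  unfold gfgmMap
  fun_prop

theorem measurable_gfgmMap [Countable ι] (p : ι → ℝ) (v : ι ⊕ ι → ℝ) :
    Measurable (gfgmMap p v) :=
  (measurable_gfgmMap_uncurry p).comp (measurable_const.prodMk measurable_id)

theorem Supermodular.comp_gfgmMap {φ : (ι → ℝ) → ℝ} (hφ : Supermodular φ) (p : ι → ℝ)
    {v : ι ⊕ ι → ℝ} (hv : ∀ j, v j ∈ Ioc 0 1) : Supermodular (φ ∘ gfgmMap p v) :=
  hφ.comp_antitone fun m =>
    (Real.antitone_rpow_of_base_le_one (hv (.inr m)).1 (hv (.inr m)).2).const_mul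
      (Real.rpow_nonneg (hv (.inl m)).1.le _)

end GFGM

theorem ae_pi_restrict_Icc_mem_Ioc {κ : Type*} [Fintype κ] :
    ∀ᵐ v ∂Measure.pi (fun _ : κ => volume.restrict (Icc (0 : ℝ) 1)), ∀ j, v j ∈ Ioc 0 1 := by
  have hIoc : ∀ᵐ x ∂volume.restrict (Icc (0 : ℝ) 1), x ∈ Ioc 0 1 := by
    rw [Measure.restrict_congr_set Ioc_ae_eq_Icc.symm]
    exact ae_restrict_mem measurableSet_Ioc
  rw [ae_all_iff]
  exact fun j => ae_iff.2 (Measure.pi_eval_preimage_null _ (i := j) (ae_iff.1 hIoc))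

theorem map_sumElim_eq_pi {Ω ι κ γ : Type*} [MeasurableSpace Ω] [MeasurableSpace γ]
    [Fintype ι] [Fintype κ] {P : Measure Ω} {U₀ : ι → Ω → γ} {U₁ : κ → Ω → γ} {μ : Measure γ}
    (hU₀ : ∀ i, Measurable (U₀ i)) (hU₁ : ∀ k, Measurable (U₁ k))
    (hindep : iIndepFun (Sum.elim U₀ U₁) P)
    (hU₀law : ∀ i, P.map (U₀ i) = μ) (hU₁law : ∀ k, P.map (U₁ k) = μ) :
    P.map (fun ω j => Sum.elim U₀ U₁ j ω) = Measure.pi fun _ => μ := by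
  rw [hindep.map_fun_eq_pi_map fun j => ?_]
  · congr 1
    funext j
    cases j with
    | inl i => exact hU₀law i
    | inr k => exact hU₁law k
  · cases j with
    | inl i => exact (hU₀ i).aemeasurable
    | inr k => exact (hU₁ k).aemeasurable

section Conditioning

variable {Ω α β : Type*} [MeasurableSpace Ω] [MeasurableSpace α] [MeasurableSpace β]
  {P : Measure Ω} {X : Ω → α} {Y : Ω → β} {f : α × β → ℝ}

theorem integral_map_comp_prodMk_right (hX : Measurable X) (hf : Measurable f) (y : β) :
    ∫ x, f (x, y) ∂(P.map X) = ∫ ω, f (X ω, y) ∂P :=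
  integral_map hX.aemeasurable (hf.comp (measurable_id.prodMk measurable_const)).aestronglyMeasurable

theorem ProbabilityTheory.IndepFun.integral_comp_eq_integral_integral [IsFiniteMeasure P]
    (hX : Measurable X) (hY : Measurable Y) (hXY : IndepFun X Y P) (hf : Measurable f)
    (hfi : Integrable f ((P.map X).prod (P.map Y))) :
    ∫ ω, f (X ω, Y ω) ∂P = ∫ y, ∫ ω, f (X ω, y) ∂P ∂(P.map Y) := by
  have hjoint : P.map (fun ω => (X ω, Y ω)) = (P.map X).prod (P.map Y) :=
    (indepFun_iff_map_prod_eq_prod_map_map hX.aemeasurable hY.aemeasurable).1 hXY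
  calc ∫ ω, f (X ω, Y ω) ∂P = ∫ z, f z ∂((P.map X).prod (P.map Y)) := by
        rw [← hjoint, integral_map (hX.prodMk hY).aemeasurable hf.aestronglyMeasurable]
    _ = ∫ y, ∫ x, f (x, y) ∂(P.map X) ∂(P.map Y) := integral_prod_symm f hfi
    _ = ∫ y, ∫ ω, f (X ω, y) ∂P ∂(P.map Y) := by
        simp only [integral_map_comp_prodMk_right hX hf]

theorem ProbabilityTheory.IndepFun.integral_comp_le_of_ae_le [IsFiniteMeasure P]
    {Ω' : Type*} [MeasurableSpace Ω'] {P' : Measure Ω'} [IsFiniteMeasure P']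
    {X' : Ω' → α} {Y' : Ω' → β} (hX : Measurable X) (hY : Measurable Y)
    (hX' : Measurable X') (hY' : Measurable Y') (hXY : IndepFun X Y P) (hXY' : IndepFun X' Y' P')
    (hYY' : P.map Y = P'.map Y') (hf : Measurable f) {C : ℝ} (hfC : ∀ z, |f z| ≤ C)
    (hle : ∀ᵐ y ∂(P.map Y), ∫ ω, f (X ω, y) ∂P ≤ ∫ ω, f (X' ω, y) ∂P') :
    ∫ ω, f (X ω, Y ω) ∂P ≤ ∫ ω, f (X' ω, Y' ω) ∂P' := by
  have hfi (μ : Measure (α × β)) [IsFiniteMeasure μ] : Integrable f μ :=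
    .of_bound hf.aestronglyMeasurable C (ae_of_all _ fun z => (Real.norm_eq_abs _).trans_le (hfC z))
  have hint : Integrable (fun y => ∫ ω, f (X ω, y) ∂P) (P.map Y) :=
    (hfi _).integral_prod_right.congr (ae_of_all _ (integral_map_comp_prodMk_right hX hf))
  have hint' : Integrable (fun y => ∫ ω, f (X' ω, y) ∂P') (P.map Y) :=
    (hfi _).integral_prod_right.congr (ae_of_all _ (integral_map_comp_prodMk_right hX' hf))
  rw [hXY.integral_comp_eq_integral_integral hX hY hf (hfi _),
    hXY'.integral_comp_eq_integral_integral hX' hY' hf (hfi _), ← hYY']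
  exact integral_mono_ae hint hint' hle

end Conditioning

theorem gfgm_supermodular_order_general
    {Ω : Type*} [MeasurableSpace Ω] (P : Measure Ω) [IsProbabilityMeasure P]
    {Ω' : Type*} [MeasurableSpace Ω'] (P' : Measure Ω') [IsProbabilityMeasure P']
    (d : ℕ) (p : Fin d → ℝ)
    (I : Ω → Fin d → Bool) (U₀ U₁ : Fin d → Ω → ℝ)
    (I' : Ω' → Fin d → Bool) (U₀' U₁' : Fin d → Ω' → ℝ)
    (hI : Measurable I) (hU₀ : ∀ m, Measurable (U₀ m)) (hU₁ : ∀ m, Measurable (U₁ m))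
    (hI' : Measurable I') (hU₀' : ∀ m, Measurable (U₀' m)) (hU₁' : ∀ m, Measurable (U₁' m))
    (hU₀law : ∀ m, P.map (U₀ m) = volume.restrict (Icc (0 : ℝ) 1))
    (hU₁law : ∀ m, P.map (U₁ m) = volume.restrict (Icc (0 : ℝ) 1))
    (hU₀law' : ∀ m, P'.map (U₀' m) = volume.restrict (Icc (0 : ℝ) 1))
    (hU₁law' : ∀ m, P'.map (U₁' m) = volume.restrict (Icc (0 : ℝ) 1))
    (hiid : iIndepFun (m := fun _ : Fin d ⊕ Fin d => (inferInstance : MeasurableSpace ℝ))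
      (Sum.elim U₀ U₁) P)
    (hIU : IndepFun I (fun ω j => Sum.elim U₀ U₁ j ω) P)
    (hiid' : iIndepFun (m := fun _ : Fin d ⊕ Fin d => (inferInstance : MeasurableSpace ℝ))
      (Sum.elim U₀' U₁') P')
    (hIU' : IndepFun I' (fun ω j => Sum.elim U₀' U₁' j ω) P')
    (hsm : ∀ φ : (Fin d → ℝ) → ℝ, Measurable φ → (∃ c : ℝ, ∀ x, |φ x| ≤ c) →
      (∀ x y, φ x + φ y ≤ φ (x ⊔ y) + φ (x ⊓ y)) →
      ∫ ω, φ (fun m => bval (I ω m)) ∂P ≤ ∫ ω, φ (fun m => bval (I' ω m)) ∂P') :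
    ∀ φ : (Fin d → ℝ) → ℝ, Measurable φ → (∃ c : ℝ, ∀ x, |φ x| ≤ c) →
      (∀ x y, φ x + φ y ≤ φ (x ⊔ y) + φ (x ⊓ y)) →
      ∫ ω, φ (fun m => U₀ m ω ^ (1 - p m) * U₁ m ω ^ bval (I ω m)) ∂P
        ≤ ∫ ω, φ (fun m => U₀' m ω ^ (1 - p m) * U₁' m ω ^ bval (I' ω m)) ∂P' := by
  rintro φ hφ ⟨c, hc⟩ hφsm
  have hV : Measurable fun ω j => Sum.elim U₀ U₁ j ω :=
    measurable_pi_lambda _ fun j => j.rec hU₀ hU₁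
  have hV' : Measurable fun ω j => Sum.elim U₀' U₁' j ω :=
    measurable_pi_lambda _ fun j => j.rec hU₀' hU₁'
  have hVlaw := map_sumElim_eq_pi hU₀ hU₁ hiid hU₀law hU₁law
  have hV'law := map_sumElim_eq_pi hU₀' hU₁' hiid' hU₀law' hU₁law'
  have hbval : Measurable bval := .of_discrete
  have hf : Measurable fun q : (Fin d → Bool) × (Fin d ⊕ Fin d → ℝ) =>
      φ (gfgmMap p q.2 fun m => bval (q.1 m)) :=
    hφ.comp ((measurable_gfgmMap_uncurry p).comp (measurable_snd.prodMk
      (measurable_pi_lambda _ fun m => hbval.comp ((measurable_pi_apply m).comp measurable_fst))))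
  refine hIU.integral_comp_le_of_ae_le hI hV hI' hV' hIU' (hVlaw.trans hV'law.symm) hf
    (fun _ => hc _) ?_
  rw [hVlaw]
  filter_upwards [ae_pi_restrict_Icc_mem_Ioc] with v hv
  exact hsm _ (hφ.comp (measurable_gfgmMap p v)) ⟨c, fun _ => hc _⟩
    (Supermodular.comp_gfgmMap hφsm p hv)

/-- Supermodular ordering of the underlying Bernoulli vectors implies supermodular ordering
of the GFGM-representation vectors `U_m = U₀ₘ^(1-p_m) * U₁ₘ^(I_m)`. -/
theorem gfgm_supermodular_order
    {Ω : Type*} [MeasurableSpace Ω] (P : Measure Ω) [IsProbabilityMeasure P]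
    {Ω' : Type*} [MeasurableSpace Ω'] (P' : Measure Ω') [IsProbabilityMeasure P']
    (d : ℕ) (hd : 2 ≤ d) (p : Fin d → ℝ) (hp : ∀ m, p m ∈ Ioo (0 : ℝ) 1)
    (I : Ω → Fin d → Bool) (U₀ U₁ : Fin d → Ω → ℝ)
    (I' : Ω' → Fin d → Bool) (U₀' U₁' : Fin d → Ω' → ℝ)
    (hI : Measurable I) (hU₀ : ∀ m, Measurable (U₀ m)) (hU₁ : ∀ m, Measurable (U₁ m))
    (hI' : Measurable I') (hU₀' : ∀ m, Measurable (U₀' m)) (hU₁' : ∀ m, Measurable (U₁' m))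
    (hU₀law : ∀ m, P.map (U₀ m) = volume.restrict (Icc (0 : ℝ) 1))
    (hU₁law : ∀ m, P.map (U₁ m) = volume.restrict (Icc (0 : ℝ) 1))
    (hU₀law' : ∀ m, P'.map (U₀' m) = volume.restrict (Icc (0 : ℝ) 1))
    (hU₁law' : ∀ m, P'.map (U₁' m) = volume.restrict (Icc (0 : ℝ) 1))
    (hImarg : ∀ m, P {ω | I ω m = true} = ENNReal.ofReal (p m))
    (hImarg' : ∀ m, P' {ω | I' ω m = true} = ENNReal.ofReal (p m))
    (hiid : iIndepFun (m := fun _ : Fin d ⊕ Fin d => (inferInstance : MeasurableSpace ℝ))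
      (Sum.elim U₀ U₁) P)
    (hIU : IndepFun I (fun ω j => Sum.elim U₀ U₁ j ω) P)
    (hiid' : iIndepFun (m := fun _ : Fin d ⊕ Fin d => (inferInstance : MeasurableSpace ℝ))
      (Sum.elim U₀' U₁') P')
    (hIU' : IndepFun I' (fun ω j => Sum.elim U₀' U₁' j ω) P')
    (hsm : ∀ φ : (Fin d → ℝ) → ℝ, Measurable φ → (∃ c : ℝ, ∀ x, |φ x| ≤ c) →
      (∀ x y, φ x + φ y ≤ φ (x ⊔ y) + φ (x ⊓ y)) →
      ∫ ω, φ (fun m => bval (I ω m)) ∂P ≤ ∫ ω, φ (fun m => bval (I' ω m)) ∂P') :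
    ∀ φ : (Fin d → ℝ) → ℝ, Measurable φ → (∃ c : ℝ, ∀ x, |φ x| ≤ c) →
      (∀ x y, φ x + φ y ≤ φ (x ⊔ y) + φ (x ⊓ y)) →
      ∫ ω, φ (fun m => U₀ m ω ^ (1 - p m) * U₁ m ω ^ bval (I ω m)) ∂P
        ≤ ∫ ω, φ (fun m => U₀' m ω ^ (1 - p m) * U₁' m ω ^ bval (I' ω m)) ∂P' :=
  gfgm_supermodular_order_general P P' d p I U₀ U₁ I' U₀' U₁' hI hU₀ hU₁ hI' hU₀' hU₁' hU₀law hU₁law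
    hU₀law' hU₁law' hiid hIU hiid' hIU' hsm
end

section
/- Fix d ≥ 2, p = (p₁,…,p_d) ∈ (0,1)^d, and a pmf f on {0,1}^d with margins Σ_{i:i_m=1} f(i) = p_m for each m. Then the Lebesgue integral of the GFGM copula over the unit cube satisfies 2^d · ∫_{[0,1]^d} C_f(u) du = ( Π_{m=1}^d 1/(2-p_m) ) · Σ_{i∈{0,1}^d} f(i)·Π_{m=1}^d ( 2(1-p_m) + i_m ). Consequently, Spearman's rho derived from average lower orthant dependence equals ρ^{cL} = ((d+1)/(2^d - d - 1))·( ( Π_{m=1}^d 1/(2-p_m) )·Σ_{i∈{0,1}^d} f(i)·Π_{m=1}^d (2(1-p_m) + i_m) - 1 ). -/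
open MeasureTheory ProbabilityTheory Set

/-!
Each summand of `C_f` is a product of one-variable factors, so by Fubini its integral over the
unit cube is the product of the one-dimensional integrals. Each of these is elementary:
`∫₀¹ x^{1/(1-p)} dx = (1-p)/(2-p)` and `∫₀¹ x dx = 1/2`, which gives
`(2(1-p) + i)/(2(2-p))` for the factor with `i ∈ {0,1}`.
-/
theorem setIntegral_univ_pi_prod {ι : Type*} [Fintype ι] {E : ι → Type*}
    [∀ i, MeasureSpace (E i)] [∀ i, SigmaFinite (volume : Measure (E i))]
    (s : ∀ i, Set (E i)) (f : ∀ i, E i → ℝ) :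
    ∫ x in univ.pi s, ∏ i, f i (x i) = ∏ i, ∫ x in s i, f i x := by
  rw [volume_pi, Measure.restrict_pi_pi, integral_fintype_prod_eq_prod]

theorem integral_Icc_zero_one_rpow {r : ℝ} (hr : -1 < r) :
    ∫ x in Icc (0 : ℝ) 1, x ^ r = (r + 1)⁻¹ := by
  rw [integral_Icc_eq_integral_Ioc, ← intervalIntegral.integral_of_le zero_le_one,
    integral_rpow (Or.inl hr)]
  simp [Real.zero_rpow (by linarith : r + 1 ≠ 0)]

noncomputable def gfgmFactor (p : ℝ) (b : Bool) (x : ℝ) : ℝ :=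
  x ^ (1 - p)⁻¹ - bval b * ((x ^ (1 - p)⁻¹ - x) / p)

theorem continuous_gfgmFactor {p : ℝ} (hp : p < 1) (b : Bool) : Continuous (gfgmFactor p b) := by
  have := Real.continuous_rpow_const (inv_nonneg.2 (sub_nonneg.2 hp.le))
  unfold gfgmFactor
  fun_prop

theorem integral_gfgmFactor {p : ℝ} (hp0 : p ≠ 0) (hp1 : p < 1) (b : Bool) :
    ∫ x in Icc (0 : ℝ) 1, gfgmFactor p b x = (2 * (1 - p) + bval b) / (2 * (2 - p)) := by
  have h1p : 1 - p ≠ 0 := by linarith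
  have h2p : 2 - p ≠ 0 := by linarith
  have hpow : ∫ x in Icc (0 : ℝ) 1, x ^ (1 - p)⁻¹ = (1 - p) / (2 - p) := by
    rw [integral_Icc_zero_one_rpow (by have := inv_pos.2 (sub_pos.2 hp1); linarith),
      show (1 - p)⁻¹ + 1 = (2 - p) / (1 - p) by field_simp; ring, inv_div]
  have hid : ∫ x in Icc (0 : ℝ) 1, x = 2⁻¹ := by
    simpa [one_add_one_eq_two] using integral_Icc_zero_one_rpow (r := 1) (by norm_num)
  have hpow_int : IntegrableOn (fun x : ℝ => x ^ (1 - p)⁻¹) (Icc 0 1) :=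
    (Real.continuous_rpow_const (inv_nonneg.2 (sub_nonneg.2 hp1.le))).integrableOn_Icc
  have hid_int : IntegrableOn (fun x : ℝ => x) (Icc 0 1) := continuous_id.integrableOn_Icc
  have hcorr_int : IntegrableOn (fun x : ℝ => bval b * ((x ^ (1 - p)⁻¹ - x) / p)) (Icc 0 1) :=
    ((hpow_int.sub hid_int).div_const p).const_mul (bval b)
  unfold gfgmFactor
  rw [integral_sub hpow_int hcorr_int, integral_const_mul, integral_div,
    integral_sub hpow_int hid_int, hpow, hid]
  cases b <;> simp only [bval] <;> field_simp <;> ring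

theorem two_pow_mul_integral_gfgm {ι : Type*} [Fintype ι] [DecidableEq ι] {p : ι → ℝ}
    (hp : ∀ m, p m ∈ Ioo (0 : ℝ) 1) (f : (ι → Bool) → ℝ) :
    (2 : ℝ) ^ Fintype.card ι *
        ∫ u in Icc (0 : ι → ℝ) 1, ∑ i, f i * ∏ m, gfgmFactor (p m) (i m) (u m)
      = (∏ m, (2 - p m)⁻¹) * ∑ i, f i * ∏ m, (2 * (1 - p m) + bval (i m)) := by
  have hint (i : ι → Bool) :
      IntegrableOn (fun u : ι → ℝ => f i * ∏ m, gfgmFactor (p m) (i m) (u m)) (Icc 0 1) := by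
    have := fun m => continuous_gfgmFactor (hp m).2 (i m)
    exact Continuous.integrableOn_Icc (by fun_prop)
  rw [integral_finsetSum _ fun i _ => hint i, ← pi_univ_Icc]
  simp only [integral_const_mul, setIntegral_univ_pi_prod, Pi.zero_apply, Pi.one_apply,
    integral_gfgmFactor (hp _).1.ne' (hp _).2]
  simp only [div_eq_mul_inv, mul_inv, Finset.prod_mul_distrib, Finset.prod_const, Finset.card_univ,
    Finset.mul_sum, inv_pow]
  refine Finset.sum_congr rfl fun i _ => ?_
  field_simp

theorem gfgm_rho_cL_general
    (d : ℕ) (p : Fin d → ℝ) (hp : ∀ m, p m ∈ Ioo (0 : ℝ) 1)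
    (f : (Fin d → Bool) → ℝ) :
    (2 : ℝ) ^ d * (∫ u in Icc (0 : Fin d → ℝ) 1, ∑ i : Fin d → Bool,
        f i * ∏ m, (u m ^ (1 - p m)⁻¹ - bval (i m) * ((u m ^ (1 - p m)⁻¹ - u m) / p m)))
      = (∏ m, (2 - p m)⁻¹) *
          ∑ i : Fin d → Bool, f i * ∏ m, (2 * (1 - p m) + bval (i m))
    ∧ ((d : ℝ) + 1) / (2 ^ d - d - 1) *
        ((2 : ℝ) ^ d * (∫ u in Icc (0 : Fin d → ℝ) 1, ∑ i : Fin d → Bool,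
          f i * ∏ m, (u m ^ (1 - p m)⁻¹ - bval (i m) * ((u m ^ (1 - p m)⁻¹ - u m) / p m))) - 1)
      = ((d : ℝ) + 1) / (2 ^ d - d - 1) *
          ((∏ m, (2 - p m)⁻¹) *
            (∑ i : Fin d → Bool, f i * ∏ m, (2 * (1 - p m) + bval (i m))) - 1) := by
  have h := two_pow_mul_integral_gfgm hp f
  rw [Fintype.card_fin] at h
  unfold gfgmFactor at h
  exact ⟨h, by rw [h]⟩

/-- Fix `d ≥ 2`, `p ∈ (0,1)^d` and a pmf `f` on `{0,1}^d` with margins `p`.  Then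
`2^d ∫_{[0,1]^d} C_f(u) du = (Π_m 1/(2-p_m)) Σ_i f(i) Π_m (2(1-p_m) + i_m)`, and
consequently Spearman's rho from average lower orthant dependence equals
`ρ^{cL} = ((d+1)/(2^d-d-1)) ((Π_m 1/(2-p_m)) Σ_i f(i) Π_m (2(1-p_m)+i_m) - 1)`. -/
theorem gfgm_rho_cL
    (d : ℕ) (hd : 2 ≤ d) (p : Fin d → ℝ) (hp : ∀ m, p m ∈ Ioo (0 : ℝ) 1)
    (f : (Fin d → Bool) → ℝ) (hf0 : ∀ i, 0 ≤ f i) (hf1 : ∑ i : Fin d → Bool, f i = 1)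
    (hmarg : ∀ m, ∑ i ∈ Finset.univ.filter (fun i : Fin d → Bool => i m = true), f i = p m) :
    (2 : ℝ) ^ d * (∫ u in Icc (0 : Fin d → ℝ) 1, ∑ i : Fin d → Bool,
        f i * ∏ m, (u m ^ (1 - p m)⁻¹ - bval (i m) * ((u m ^ (1 - p m)⁻¹ - u m) / p m)))
      = (∏ m, (2 - p m)⁻¹) *
          ∑ i : Fin d → Bool, f i * ∏ m, (2 * (1 - p m) + bval (i m))
    ∧ ((d : ℝ) + 1) / (2 ^ d - d - 1) *
        ((2 : ℝ) ^ d * (∫ u in Icc (0 : Fin d → ℝ) 1, ∑ i : Fin d → Bool,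
          f i * ∏ m, (u m ^ (1 - p m)⁻¹ - bval (i m) * ((u m ^ (1 - p m)⁻¹ - u m) / p m))) - 1)
      = ((d : ℝ) + 1) / (2 ^ d - d - 1) *
          ((∏ m, (2 - p m)⁻¹) *
            (∑ i : Fin d → Bool, f i * ∏ m, (2 * (1 - p m) + bval (i m))) - 1) :=
  gfgm_rho_cL_general d p hp f
end

section
/- Fix d ≥ 2 and p = (p₁,…,p_d) ∈ (0,1)^d. Let I be a {0,1}^d-valued random vector with P(I_m = 1) = p_m, let U₀, U₁ be vectors of i.i.d. standard uniform random variables on [0,1], with I, U₀, U₁ mutually independent, and set U_m = U₀,ₘ^{1-p_m}·U₁,ₘ^{I_m}. Then E[ Π_{m=1}^d U_m ] = 2^{-d} · ( Π_{m=1}^d 1/(2-p_m) ) · E[ Π_{m=1}^d (2 - I_m) ]. Consequently, Spearman's rho derived from average upper orthant dependence equals ρ^{cU} = ((d+1)/(2^d - d - 1))·( ( Π_{m=1}^d 1/(2-p_m) )·E[ Π_{m=1}^d (2 - I_m) ] - 1 ). -/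
open MeasureTheory ProbabilityTheory Set

lemma bval_nonneg (b : Bool) : 0 ≤ bval b := by
  cases b <;> simp [bval]

lemma inv_bval_add_one (b : Bool) : (bval b + 1)⁻¹ = (2 - bval b) / 2 := by
  cases b <;> norm_num [bval]

section Integrals

variable {Ω : Type*} [MeasurableSpace Ω] {P : Measure Ω}

lemma ae_mem_Icc_of_map_eq_uniform {X : Ω → ℝ} (hX : Measurable X)
    (hlaw : P.map X = volume.restrict (Icc (0 : ℝ) 1)) :
    ∀ᵐ ω ∂P, X ω ∈ Icc (0 : ℝ) 1 :=
  ae_of_ae_map hX.aemeasurable (hlaw ▸ ae_restrict_mem measurableSet_Icc)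

lemma integral_rpow_of_map_eq_uniform {X : Ω → ℝ} (hX : Measurable X)
    (hlaw : P.map X = volume.restrict (Icc (0 : ℝ) 1)) {a : ℝ} (ha : -1 < a) :
    ∫ ω, X ω ^ a ∂P = (a + 1)⁻¹ := by
  rw [← integral_map (f := fun x : ℝ => x ^ a) hX.aemeasurable
    (measurable_id.pow_const a).aestronglyMeasurable, hlaw,
    integral_Icc_eq_integral_Ioc, ← intervalIntegral.integral_of_le zero_le_one,
    integral_rpow (Or.inl ha), Real.one_rpow, Real.zero_rpow (by linarith)]
  ring

lemma ProbabilityTheory.iIndepFun.integral_prod_rpow_of_map_eq_uniform {ι : Type*} [Fintype ι]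
    {X : ι → Ω → ℝ} (hind : iIndepFun X P) (hX : ∀ i, Measurable (X i))
    (hlaw : ∀ i, P.map (X i) = volume.restrict (Icc (0 : ℝ) 1)) {e : ι → ℝ}
    (he : ∀ i, -1 < e i) :
    ∫ ω, ∏ i, X i ω ^ e i ∂P = ∏ i, (e i + 1)⁻¹ := by
  rw [hind.integral_fun_prod_comp (f := fun i x => x ^ e i) (fun i => (hX i).aemeasurable)
    (fun i => (measurable_id.pow_const (e i)).aestronglyMeasurable)]
  exact Finset.prod_congr rfl fun i _ => integral_rpow_of_map_eq_uniform (hX i) (hlaw i) (he i)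

lemma integrable_prod_rpow_of_ae_mem_Icc [IsFiniteMeasure P] {ι : Type*} [Fintype ι]
    {X : ι → Ω → ℝ} (hX : ∀ i, Measurable (X i))
    (hmem : ∀ i, ∀ᵐ ω ∂P, X i ω ∈ Icc (0 : ℝ) 1) {e : ι → ℝ} (he : ∀ i, 0 ≤ e i) :
    Integrable (fun ω => ∏ i, X i ω ^ e i) P := by
  refine Integrable.of_bound
    (Finset.measurable_prod _ fun i _ => (hX i).pow_const (e i)).aestronglyMeasurable 1 ?_
  filter_upwards [ae_all_iff.2 hmem] with ω hω
  rw [norm_prod]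
  refine Finset.prod_le_one (fun _ _ => norm_nonneg _) fun i _ => ?_
  rw [Real.norm_of_nonneg (Real.rpow_nonneg (hω i).1 _)]
  exact Real.rpow_le_one (hω i).1 (hω i).2 (he i)

lemma ProbabilityTheory.IndepFun.integral_comp_eq_sum_measureReal_mul {β γ : Type*} [Fintype β]
    [MeasurableSpace β] [MeasurableSingletonClass β] [MeasurableSpace γ]
    {X : Ω → β} {Y : Ω → γ} (hXY : X ⟂ᵢ[P] Y) (hX : Measurable X) (hY : Measurable Y)
    {F : β → γ → ℝ} (hF : ∀ b, Measurable (F b))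
    (hint : ∀ b, Integrable (fun ω => F b (Y ω)) P) :
    ∫ ω, F (X ω) (Y ω) ∂P = ∑ b, P.real (X ⁻¹' {b}) * ∫ ω, F b (Y ω) ∂P := by
  have hfiber : ∀ b, MeasurableSet (X ⁻¹' {b}) := fun b => hX (measurableSet_singleton b)
  have hon : ∀ b, EqOn (fun ω => F (X ω) (Y ω)) (fun ω => F b (Y ω)) (X ⁻¹' {b}) :=
    fun b ω hω => congrArg (fun x => F x (Y ω)) hω
  calc ∫ ω, F (X ω) (Y ω) ∂P = ∫ ω in ⋃ b, X ⁻¹' {b}, F (X ω) (Y ω) ∂P := by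
        rw [← preimage_iUnion, iUnion_of_singleton, preimage_univ, setIntegral_univ]
    _ = ∑ b, ∫ ω in X ⁻¹' {b}, F (X ω) (Y ω) ∂P :=
        integral_iUnion_fintype hfiber (pairwise_disjoint_fiber X)
          fun b => (hint b).integrableOn.congr_fun (hon b).symm (hfiber b)
    _ = ∑ b, ∫ ω in X ⁻¹' {b}, F b (Y ω) ∂P :=
        Finset.sum_congr rfl fun b _ => setIntegral_congr_fun (hfiber b) (hon b)
    _ = ∑ b, P.real (X ⁻¹' {b}) * ∫ ω, F b (Y ω) ∂P :=
        Finset.sum_congr rfl fun b _ =>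
          Indep.setIntegral_eq_smul hX.comap_le ((IndepFun_iff_Indep _ _ _).1 hXY)
            hY.aemeasurable ⟨{b}, measurableSet_singleton b, rfl⟩ (hF b).aestronglyMeasurable

end Integrals

theorem gfgm_rho_cU_general
    {Ω : Type*} [MeasurableSpace Ω] (P : Measure Ω) [IsProbabilityMeasure P]
    (d : ℕ) (p : Fin d → ℝ) (hp : ∀ m, p m ∈ Ioo (0 : ℝ) 1)
    (I : Ω → Fin d → Bool) (U₀ U₁ : Fin d → Ω → ℝ)
    (hI : Measurable I) (hU₀ : ∀ m, Measurable (U₀ m)) (hU₁ : ∀ m, Measurable (U₁ m))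
    (hU₀law : ∀ m, P.map (U₀ m) = volume.restrict (Icc (0 : ℝ) 1))
    (hU₁law : ∀ m, P.map (U₁ m) = volume.restrict (Icc (0 : ℝ) 1))
    (hiid : iIndepFun (m := fun _ : Fin d ⊕ Fin d => (inferInstance : MeasurableSpace ℝ))
      (Sum.elim U₀ U₁) P)
    (hIU : IndepFun I (fun ω j => Sum.elim U₀ U₁ j ω) P) :
    (∫ ω, ∏ m, (U₀ m ω ^ (1 - p m) * U₁ m ω ^ bval (I ω m)) ∂P)
      = ((2 : ℝ) ^ d)⁻¹ * (∏ m, (2 - p m)⁻¹) * ∫ ω, ∏ m, (2 - bval (I ω m)) ∂P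
    ∧ ((d : ℝ) + 1) / (2 ^ d - d - 1) *
        ((2 : ℝ) ^ d * (∫ ω, ∏ m, (U₀ m ω ^ (1 - p m) * U₁ m ω ^ bval (I ω m)) ∂P) - 1)
      = ((d : ℝ) + 1) / (2 ^ d - d - 1) *
          ((∏ m, (2 - p m)⁻¹) * (∫ ω, ∏ m, (2 - bval (I ω m)) ∂P) - 1) := by
  set U := Sum.elim U₀ U₁
  set e : (Fin d → Bool) → Fin d ⊕ Fin d → ℝ := fun b => Sum.elim (1 - p) (bval ∘ b)
  have he : ∀ b j, 0 ≤ e b j := by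
    rintro b (m | m)
    exacts [sub_nonneg.2 (hp m).2.le, bval_nonneg _]
  have hU : ∀ j, Measurable (U j) := by rintro (m | m) <;> simp [U, hU₀, hU₁]
  have hUlaw : ∀ j, P.map (U j) = volume.restrict (Icc (0 : ℝ) 1) := by
    rintro (m | m) <;> simp [U, hU₀law, hU₁law]
  have hUvec : Measurable fun ω j => U j ω := measurable_pi_lambda _ hU
  have hmoment : ∀ b, ∫ ω, ∏ j, U j ω ^ e b j ∂P
      = ((2 : ℝ) ^ d)⁻¹ * (∏ m, (2 - p m)⁻¹) * ∏ m, (2 - bval (b m)) := by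
    intro b
    rw [hiid.integral_prod_rpow_of_map_eq_uniform hU hUlaw fun j => by linarith [he b j],
      Fintype.prod_sum_type]
    simp only [e, Sum.elim_inl, Sum.elim_inr, Pi.sub_apply, Pi.one_apply, Function.comp_apply,
      inv_bval_add_one, Finset.prod_div_distrib, Finset.prod_const, Finset.card_univ,
      Fintype.card_fin]
    ring_nf
  have hcond := hIU.integral_comp_eq_sum_measureReal_mul hI hUvec
    (F := fun b v => ∏ j, v j ^ e b j) (by fun_prop) fun b =>
      integrable_prod_rpow_of_ae_mem_Icc hU
        (fun j => ae_mem_Icc_of_map_eq_uniform (hU j) (hUlaw j)) (he b)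
  have hcondI := hIU.integral_comp_eq_sum_measureReal_mul hI hUvec
    (F := fun b _ => ∏ m, (2 - bval (b m))) (fun _ => measurable_const)
    fun _ => integrable_const _
  have hintegrand : ∀ ω, ∏ m, (U₀ m ω ^ (1 - p m) * U₁ m ω ^ bval (I ω m))
      = ∏ j, U j ω ^ e (I ω) j := by
    intro ω
    simp [U, e, Fintype.prod_sum_type, Finset.prod_mul_distrib]
  have hmean : (∫ ω, ∏ m, (U₀ m ω ^ (1 - p m) * U₁ m ω ^ bval (I ω m)) ∂P)
      = ((2 : ℝ) ^ d)⁻¹ * (∏ m, (2 - p m)⁻¹) * ∫ ω, ∏ m, (2 - bval (I ω m)) ∂P := by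
    simp only [hintegrand, hcond, hmoment, hcondI, integral_const, probReal_univ, one_smul,
      Finset.mul_sum]
    exact Finset.sum_congr rfl fun b _ => by ring
  refine ⟨hmean, ?_⟩
  rw [hmean, ← mul_assoc, ← mul_assoc, mul_inv_cancel₀ (by positivity), one_mul]

/-- Fix `d ≥ 2` and `p ∈ (0,1)^d`.  For the GFGM representation
`U_m = U₀ₘ^(1-p_m) * U₁ₘ^(I_m)`, one has
`E[Π_m U_m] = 2^{-d} (Π_m 1/(2-p_m)) E[Π_m (2 - I_m)]`, and consequently Spearman's rho
from average upper orthant dependence equals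
`ρ^{cU} = ((d+1)/(2^d-d-1)) ((Π_m 1/(2-p_m)) E[Π_m (2 - I_m)] - 1)`. -/
theorem gfgm_rho_cU
    {Ω : Type*} [MeasurableSpace Ω] (P : Measure Ω) [IsProbabilityMeasure P]
    (d : ℕ) (hd : 2 ≤ d) (p : Fin d → ℝ) (hp : ∀ m, p m ∈ Ioo (0 : ℝ) 1)
    (I : Ω → Fin d → Bool) (U₀ U₁ : Fin d → Ω → ℝ)
    (hI : Measurable I) (hU₀ : ∀ m, Measurable (U₀ m)) (hU₁ : ∀ m, Measurable (U₁ m))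
    (hU₀law : ∀ m, P.map (U₀ m) = volume.restrict (Icc (0 : ℝ) 1))
    (hU₁law : ∀ m, P.map (U₁ m) = volume.restrict (Icc (0 : ℝ) 1))
    (hImarg : ∀ m, P {ω | I ω m = true} = ENNReal.ofReal (p m))
    (hiid : iIndepFun (m := fun _ : Fin d ⊕ Fin d => (inferInstance : MeasurableSpace ℝ))
      (Sum.elim U₀ U₁) P)
    (hIU : IndepFun I (fun ω j => Sum.elim U₀ U₁ j ω) P) :
    (∫ ω, ∏ m, (U₀ m ω ^ (1 - p m) * U₁ m ω ^ bval (I ω m)) ∂P)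
      = ((2 : ℝ) ^ d)⁻¹ * (∏ m, (2 - p m)⁻¹) * ∫ ω, ∏ m, (2 - bval (I ω m)) ∂P
    ∧ ((d : ℝ) + 1) / (2 ^ d - d - 1) *
        ((2 : ℝ) ^ d * (∫ ω, ∏ m, (U₀ m ω ^ (1 - p m) * U₁ m ω ^ bval (I ω m)) ∂P) - 1)
      = ((d : ℝ) + 1) / (2 ^ d - d - 1) *
          ((∏ m, (2 - p m)⁻¹) * (∫ ω, ∏ m, (2 - bval (I ω m)) ∂P) - 1) :=
  gfgm_rho_cU_general P d p hp I U₀ U₁ hI hU₀ hU₁ hU₀law hU₁law hiid hIU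
end

section
/- Fix d ≥ 2 and p = (p₁,…,p_d) ∈ (0,1)^d. Let U = (U₁,…,U_d) and U' = (U'₁,…,U'_d) be independent random vectors, each constructed via the GFGM representation U_m = U₀,ₘ^{1-p_m}·U₁,ₘ^{I_m} from a {0,1}^d-valued random vector with pmf f (margins Σ_{i:i_m=1} f(i) = p_m) and vectors of i.i.d. standard uniform random variables, with all components of the construction independent across the two copies. Then P( U'₁ ≤ U₁, …, U'_d ≤ U_d ) = Σ_{i∈{0,1}^d} Σ_{j∈{0,1}^d} f(i)·f(j)·Π_{m=1}^d ( 1/2 - (i_m + j_m)/(2 p_m) + ( j_m(1-p_m) + i_m )/( p_m (2-p_m) ) ). Consequently, Kendall's tau equals τ = (1/(2^{d-1}-1))·( 2^d·Σ_{i,j∈{0,1}^d} f(i)f(j)·Π_{m=1}^d ( 1/2 - (i_m+j_m)/(2p_m) + (j_m(1-p_m)+i_m)/(p_m(2-p_m)) ) - 1 ). -/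
/-!
Conditionally on `I = i` and `I' = j`, the event `U' ≤ U` is an intersection over the coordinates
of independent events `V'^(1-p) W'^(j_m) ≤ V^(1-p) W^(i_m)` in four independent uniforms, so its
probability is a product. On `[0,1]` the distribution function of `V^(1-p) W^c` is `t^(1/(1-p))`
for `c = 0` and `(t - (1-p) t^(1/(1-p))) / p` for `c = 1`; at `t = V^(1-p) W^b` both are
combinations of products of powers of independent uniforms, whose means `1/(r+1)` give the factor.
-/

open MeasureTheory ProbabilityTheory Set

lemma ProbabilityTheory.iIndepFun.map_pair_eq_pi {Ω ι α : Type*} [MeasurableSpace Ω]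
    [MeasurableSpace α] [Fintype ι] {P : Measure Ω} {X Y : ι → Ω → α} (hX : ∀ i, Measurable (X i))
    (hY : ∀ i, Measurable (Y i)) (h : iIndepFun (Sum.elim X Y) P) :
    P.map (fun ω i => (X i ω, Y i ω)) = Measure.pi fun i => (P.map (X i)).prod (P.map (Y i)) := by
  have := h.isProbabilityMeasure
  have hXY : ∀ k, Measurable (Sum.elim X Y k) := fun k => by cases k <;> simp [hX, hY]
  have hpair := (measurePreserving_arrowProdEquivProdArrow α α ι _ _).symm.comp
    (measurePreserving_sumPiEquivProdPi fun k => P.map (Sum.elim X Y k))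
  rw [← h.map_fun_eq_pi_map fun k => (hXY k).aemeasurable] at hpair
  have hmap := hpair.map_eq
  rw [Measure.map_map hpair.measurable (measurable_pi_lambda _ hXY)] at hmap
  exact hmap

lemma MeasureTheory.Measure.pi_prod_pi_setOf_forall {ι α β : Type*} [Fintype ι] [MeasurableSpace α]
    [MeasurableSpace β] (μ : ι → Measure α) (ν : ι → Measure β) [∀ i, SigmaFinite (μ i)]
    [∀ i, SigmaFinite (ν i)] {B : ι → Set (α × β)} (hB : ∀ i, MeasurableSet (B i)) :
    ((Measure.pi μ).prod (Measure.pi ν)) {z | ∀ i, (z.1 i, z.2 i) ∈ B i}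
      = ∏ i, ((μ i).prod (ν i)) (B i) := by
  rw [← Measure.pi_pi, ← (measurePreserving_arrowProdEquivProdArrow α β ι μ ν).symm.measure_preimage
    (MeasurableSet.univ_pi hB).nullMeasurableSet]
  congr 1
  ext z
  simp [MeasurableEquiv.arrowProdEquivProdArrow, Equiv.arrowProdEquivProdArrow]

lemma ProbabilityTheory.IndepFun.map_prod_pair_eq_prod_pi {Ω ι α β : Type*} [MeasurableSpace Ω]
    [MeasurableSpace α] [MeasurableSpace β] [Fintype ι] {P : Measure Ω} {J : Ω → β}
    {X Y : ι → Ω → α} (hJ : Measurable J) (hX : ∀ i, Measurable (X i))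
    (hY : ∀ i, Measurable (Y i)) (hXY : iIndepFun (Sum.elim X Y) P)
    (hJXY : IndepFun J (fun ω k => Sum.elim X Y k ω) P) :
    P.map (fun ω => (J ω, fun i => (X i ω, Y i ω)))
      = (P.map J).prod (Measure.pi fun i => (P.map (X i)).prod (P.map (Y i))) := by
  have := hXY.isProbabilityMeasure
  have hpair : Measurable fun u : ι ⊕ ι → α => fun i => (u (Sum.inl i), u (Sum.inr i)) := by
    fun_prop
  have hind : IndepFun J (fun ω i => (X i ω, Y i ω)) P := hJXY.comp measurable_id hpair
  rw [hind.map_prod_eq_prod_map_map hJ.aemeasurable (by fun_prop),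
    hXY.map_pair_eq_pi hX hY]

lemma MeasureTheory.Measure.prod_prod_prod_apply_of_fintype {α α' β β' : Type*} [Fintype α]
    [Fintype α'] [MeasurableSpace α] [MeasurableSpace α'] [MeasurableSingletonClass α]
    [MeasurableSingletonClass α'] [MeasurableSpace β] [MeasurableSpace β']
    (ν : Measure α) (ν' : Measure α') (μ : Measure β) (μ' : Measure β') [SFinite μ]
    [SFinite μ'] {s : Set ((α × β) × (α' × β'))}
    (hs : MeasurableSet s) :
    ((ν.prod μ).prod (ν'.prod μ')) s
      = ∑ a, ∑ a', ν {a} * ν' {a'} * (μ.prod μ') {z | ((a, z.1), (a', z.2)) ∈ s} := by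
  have hcell : ∀ a a', MeasurableSet {z : β × β' | ((a, z.1), (a', z.2)) ∈ s} :=
    fun a a' => hs.preimage (by fun_prop)
  have hinner : ∀ a b, (ν'.prod μ') (Prod.mk (a, b) ⁻¹' s)
      = ∑ a', ν' {a'} * μ' (Prod.mk b ⁻¹' {z : β × β' | ((a, z.1), (a', z.2)) ∈ s}) := by
    intro a b
    rw [Measure.prod_apply (measurable_prodMk_left hs), lintegral_fintype]
    exact Finset.sum_congr rfl fun a' _ => mul_comm _ _
  rw [Measure.prod_apply hs, lintegral_prod _ (measurable_measure_prodMk_left hs).aemeasurable,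
    lintegral_fintype]
  refine Finset.sum_congr rfl fun a _ => ?_
  simp_rw [hinner a]
  rw [lintegral_finsetSum _ fun a' _ =>
    (measurable_measure_prodMk_left (hcell a a')).const_mul _, Finset.sum_mul]
  refine Finset.sum_congr rfl fun a' _ => ?_
  rw [lintegral_const_mul _ (measurable_measure_prodMk_left (hcell a a')),
    ← Measure.prod_apply (hcell a a')]
  ring

lemma MeasureTheory.Measure.real_prod_prod_prod_apply_of_fintype {α α' β β' : Type*}
    [Fintype α] [Fintype α'] [MeasurableSpace α] [MeasurableSpace α'] [MeasurableSingletonClass α]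
    [MeasurableSingletonClass α'] [MeasurableSpace β] [MeasurableSpace β']
    (ν : Measure α) (ν' : Measure α') (μ : Measure β) (μ' : Measure β') [IsFiniteMeasure ν]
    [IsFiniteMeasure ν'] [IsFiniteMeasure μ] [IsFiniteMeasure μ'] {s : Set ((α × β) × (α' × β'))}
    (hs : MeasurableSet s) :
    ((ν.prod μ).prod (ν'.prod μ')).real s
      = ∑ a, ∑ a', ν.real {a} * ν'.real {a'} *
          (μ.prod μ').real {z | ((a, z.1), (a', z.2)) ∈ s} := by
  simp only [measureReal_def, prod_prod_prod_apply_of_fintype ν ν' μ μ' hs]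
  rw [ENNReal.toReal_sum fun a _ => ENNReal.sum_ne_top.2 fun a' _ => by finiteness]
  refine Finset.sum_congr rfl fun a _ => ?_
  rw [ENNReal.toReal_sum fun a' _ => by finiteness]
  simp only [ENNReal.toReal_mul]

noncomputable abbrev unitUniform : Measure ℝ := volume.restrict (Icc 0 1)

instance : IsProbabilityMeasure unitUniform := ⟨by simp [Real.volume_Icc]⟩

lemma unitUniform_Iic (u : ℝ) : unitUniform (Iic u) = ENNReal.ofReal (min u 1) := by
  have h : Iic u ∩ Icc 0 1 = Icc 0 (min u 1) := by
    ext x; simp only [mem_inter_iff, mem_Iic, mem_Icc, le_min_iff]; tauto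
  rw [Measure.restrict_apply measurableSet_Iic, h, Real.volume_Icc, sub_zero]

lemma unitUniform_rpow_le_rpow {a s : ℝ} (ha : 0 < a) (hs : s ∈ Icc (0 : ℝ) 1) :
    unitUniform {x | x ^ a ≤ s ^ a} = ENNReal.ofReal s := by
  have h : {x : ℝ | x ^ a ≤ s ^ a} ∩ Icc 0 1 = Iic s ∩ Icc 0 1 := by
    ext x
    simp only [mem_inter_iff, mem_ofPred_eq, mem_Iic, mem_Icc]
    constructor <;> rintro ⟨hx, hx0, hx1⟩
    · exact ⟨(Real.rpow_le_rpow_iff hx0 hs.1 ha).1 hx, hx0, hx1⟩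
    · exact ⟨(Real.rpow_le_rpow_iff hx0 hs.1 ha).2 hx, hx0, hx1⟩
  rw [Measure.restrict_apply (measurableSet_le (by fun_prop) measurable_const), h,
    ← Measure.restrict_apply measurableSet_Iic, unitUniform_Iic, min_eq_left hs.2]

lemma integral_unitUniform_rpow {r : ℝ} (hr : -1 < r) : ∫ x, x ^ r ∂unitUniform = 1 / (r + 1) := by
  rw [unitUniform, ← Measure.restrict_congr_set Ioc_ae_eq_Icc,
    ← intervalIntegral.integral_of_le zero_le_one, integral_rpow (Or.inl hr), Real.one_rpow, Real.zero_rpow (by linarith), sub_zero]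

lemma min_rpow_div_rpow_nonneg {a s x : ℝ} (hs : 0 ≤ s) (hx : 0 ≤ x) :
    0 ≤ min (s ^ a / x ^ a) 1 :=
  le_min (div_nonneg (Real.rpow_nonneg hs _) (Real.rpow_nonneg hx _)) zero_le_one

lemma integrableOn_min_rpow_div_rpow {a s : ℝ} (hs : 0 ≤ s) :
    IntegrableOn (fun x : ℝ => min (s ^ a / x ^ a) 1) (Ioc 0 1) := by
  refine Integrable.of_bound (by fun_prop : Measurable _).aestronglyMeasurable 1
    ((ae_restrict_iff' measurableSet_Ioc).2 (Filter.Eventually.of_forall fun x hx => ?_))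
  rw [Real.norm_eq_abs, abs_of_nonneg (min_rpow_div_rpow_nonneg hs hx.1.le)]
  exact min_le_right _ _

lemma setIntegral_min_rpow_div_rpow {a s : ℝ} (ha0 : 0 < a) (ha1 : a < 1)
    (hs : s ∈ Icc (0 : ℝ) 1) :
    ∫ x in Ioc 0 1, min (s ^ a / x ^ a) 1 = (s ^ a - a * s) / (1 - a) := by
  have hint := integrableOn_min_rpow_div_rpow (a := a) hs.1
  have hsplit : Ioc (0 : ℝ) 1 = Ioc 0 s ∪ Ioc s 1 := (Ioc_union_Ioc_eq_Ioc hs.1 hs.2).symm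
  have hlow : ∫ x in Ioc 0 s, min (s ^ a / x ^ a) 1 = s := by
    rw [setIntegral_congr_fun measurableSet_Ioc (g := fun _ => (1 : ℝ)) fun x hx => ?_]
    · simp [hs.1]
    · exact min_eq_right ((one_le_div (Real.rpow_pos_of_pos hx.1 a)).2
        (Real.rpow_le_rpow hx.1.le hx.2 ha0.le))
  have hhigh : ∫ x in Ioc s 1, min (s ^ a / x ^ a) 1 = s ^ a * ((1 - s ^ (1 - a)) / (1 - a)) := by
    rw [setIntegral_congr_fun measurableSet_Ioc (g := fun x => s ^ a * x ^ (-a)) fun x hx => ?_]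
    · rw [integral_const_mul, ← intervalIntegral.integral_of_le hs.2,
        integral_rpow (Or.inl (by linarith)), Real.one_rpow, neg_add_eq_sub]
    · have hx0 : 0 < x := hs.1.trans_lt hx.1
      show _ = s ^ a * x ^ (-a)
      rw [min_eq_left ((div_le_one (Real.rpow_pos_of_pos hx0 a)).2
          (Real.rpow_le_rpow hs.1 hx.1.le ha0.le)), Real.rpow_neg hx0.le, div_eq_mul_inv]
  have hpow : s ^ a * s ^ (1 - a) = s := by
    rw [← Real.rpow_add' hs.1 (by norm_num), add_sub_cancel, Real.rpow_one]
  rw [hsplit, setIntegral_union (Ioc_disjoint_Ioc_of_le le_rfl) measurableSet_Ioc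
    (hint.mono_set (hsplit ▸ subset_union_left)) (hint.mono_set (hsplit ▸ subset_union_right)),
    hlow, hhigh]
  have : 1 - a ≠ 0 := by linarith
  field_simp
  linear_combination -hpow

lemma unitUniform_prod_rpow_mul_le_rpow {a s : ℝ} (ha0 : 0 < a) (ha1 : a < 1)
    (hs : s ∈ Icc (0 : ℝ) 1) :
    (unitUniform.prod unitUniform) {z : ℝ × ℝ | z.1 ^ a * z.2 ≤ s ^ a}
      = ENNReal.ofReal ((s ^ a - a * s) / (1 - a)) := by
  have hslice : ∀ x ∈ Ioc (0 : ℝ) 1,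
      unitUniform (Prod.mk x ⁻¹' {z : ℝ × ℝ | z.1 ^ a * z.2 ≤ s ^ a})
        = ENNReal.ofReal (min (s ^ a / x ^ a) 1) := by
    intro x hx
    have hpre : Prod.mk x ⁻¹' {z : ℝ × ℝ | z.1 ^ a * z.2 ≤ s ^ a} = Iic (s ^ a / x ^ a) := by
      ext y
      rw [mem_preimage, mem_ofPred_eq, mem_Iic, le_div_iff₀ (Real.rpow_pos_of_pos hx.1 a),
        mul_comm]
    rw [hpre, unitUniform_Iic]
  have hIoc : unitUniform = volume.restrict (Ioc 0 1) :=
    (Measure.restrict_congr_set Ioc_ae_eq_Icc).symm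
  rw [Measure.prod_apply (measurableSet_le (by fun_prop) measurable_const)]
  nth_rw 1 [hIoc]
  rw [setLIntegral_congr_fun measurableSet_Ioc hslice, ← ofReal_integral_eq_lintegral_ofReal
    (integrableOn_min_rpow_div_rpow hs.1) ((ae_restrict_iff' measurableSet_Ioc).2
      (Filter.Eventually.of_forall fun x hx => min_rpow_div_rpow_nonneg hs.1 hx.1.le)),
    setIntegral_min_rpow_div_rpow ha0 ha1 hs]

noncomputable def gfgmCoord (p : ℝ) (b : Bool) (w : ℝ × ℝ) : ℝ := w.1 ^ (1 - p) * w.2 ^ bval b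

noncomputable def gfgmCdf (p : ℝ) (b : Bool) (t : ℝ) : ℝ :=
  if b then (t - (1 - p) * t ^ (1 - p)⁻¹) / p else t ^ (1 - p)⁻¹

noncomputable def tauFactor (p x y : ℝ) : ℝ :=
  1 / 2 - (x + y) / (2 * p) + (y * (1 - p) + x) / (p * (2 - p))

@[fun_prop]
lemma Measurable.gfgmCoord {α : Type*} [MeasurableSpace α] (p : ℝ) {b : α → Bool}
    {w : α → ℝ × ℝ} (hb : Measurable b) (hw : Measurable w) :
    Measurable fun x => _root_.gfgmCoord p (b x) (w x) := by
  refine (measurable_from_prod_countable_right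
    (f := fun x : Bool × (ℝ × ℝ) => _root_.gfgmCoord p x.1 x.2) fun c => ?_).comp (hb.prodMk hw)
  unfold _root_.gfgmCoord
  fun_prop

lemma gfgmCoord_mem_Icc {p : ℝ} (hp : p ≤ 1) (b : Bool) {w : ℝ × ℝ}
    (hw : w.1 ∈ Icc (0 : ℝ) 1 ∧ w.2 ∈ Icc (0 : ℝ) 1) : gfgmCoord p b w ∈ Icc (0 : ℝ) 1 :=
  ⟨mul_nonneg (Real.rpow_nonneg hw.1.1 _) (Real.rpow_nonneg hw.2.1 _),
    mul_le_one₀ (Real.rpow_le_one hw.1.1 hw.1.2 (by linarith)) (Real.rpow_nonneg hw.2.1 _)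
      (Real.rpow_le_one hw.2.1 hw.2.2 (bval_nonneg b))⟩

lemma unitUniform_prod_gfgmCoord_le {p : ℝ} (hp : p ∈ Ioo (0 : ℝ) 1) (b : Bool) {t : ℝ}
    (ht : t ∈ Icc (0 : ℝ) 1) :
    (unitUniform.prod unitUniform) {w | gfgmCoord p b w ≤ t} = ENNReal.ofReal (gfgmCdf p b t) := by
  have ha : 0 < 1 - p := by linarith [hp.2]
  obtain ⟨s, hs, rfl⟩ : ∃ s ∈ Icc (0 : ℝ) 1, s ^ (1 - p) = t :=
    ⟨t ^ (1 - p)⁻¹, ⟨Real.rpow_nonneg ht.1 _, Real.rpow_le_one ht.1 ht.2 (inv_nonneg.2 ha.le)⟩,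
      Real.rpow_inv_rpow ht.1 ha.ne'⟩
  have hs' : (s ^ (1 - p)) ^ (1 - p)⁻¹ = s := Real.rpow_rpow_inv hs.1 ha.ne'
  cases b
  · have hset : {w : ℝ × ℝ | gfgmCoord p false w ≤ s ^ (1 - p)}
        = {x : ℝ | x ^ (1 - p) ≤ s ^ (1 - p)} ×ˢ univ := by
      ext w; simp [gfgmCoord, bval]
    rw [hset, Measure.prod_prod, measure_univ, mul_one, unitUniform_rpow_le_rpow ha hs,
      gfgmCdf, if_neg Bool.false_ne_true, hs']
  · have hset : {w : ℝ × ℝ | gfgmCoord p true w ≤ s ^ (1 - p)}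
        = {z : ℝ × ℝ | z.1 ^ (1 - p) * z.2 ≤ s ^ (1 - p)} := by
      ext w; simp [gfgmCoord, bval]
    rw [hset, unitUniform_prod_rpow_mul_le_rpow ha (by linarith [hp.1]) hs, gfgmCdf, if_pos rfl,
      hs', sub_sub_cancel]

lemma ae_mem_Icc_unitUniform_prod :
    ∀ᵐ w ∂(unitUniform.prod unitUniform), w.1 ∈ Icc (0 : ℝ) 1 ∧ w.2 ∈ Icc (0 : ℝ) 1 :=
  (Measure.quasiMeasurePreserving_fst.ae (ae_restrict_mem measurableSet_Icc)).and
    (Measure.quasiMeasurePreserving_snd.ae (ae_restrict_mem measurableSet_Icc))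

lemma integrable_gfgmCoord_rpow {p : ℝ} (hp : p ≤ 1) (b : Bool) {r : ℝ} (hr : 0 ≤ r) :
    Integrable (fun w => gfgmCoord p b w ^ r) (unitUniform.prod unitUniform) := by
  have hmeas : Measurable fun w => gfgmCoord p b w ^ r := by fun_prop
  refine Integrable.of_bound hmeas.aestronglyMeasurable 1
    (ae_mem_Icc_unitUniform_prod.mono fun w hw => ?_)
  have ht := gfgmCoord_mem_Icc hp b hw
  rw [Real.norm_eq_abs, abs_of_nonneg (Real.rpow_nonneg ht.1 r)]
  exact Real.rpow_le_one ht.1 ht.2 hr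

lemma integral_gfgmCoord_rpow {p : ℝ} (hp : p ≤ 1) (b : Bool) {r : ℝ} (hr : 0 ≤ r) :
    ∫ w, gfgmCoord p b w ^ r ∂(unitUniform.prod unitUniform)
      = 1 / ((1 - p) * r + 1) * (1 / (bval b * r + 1)) := by
  have hfac : (fun w => gfgmCoord p b w ^ r)
      =ᵐ[unitUniform.prod unitUniform] fun w => w.1 ^ ((1 - p) * r) * w.2 ^ (bval b * r) := by
    filter_upwards [ae_mem_Icc_unitUniform_prod] with w hw
    rw [gfgmCoord, Real.mul_rpow (Real.rpow_nonneg hw.1.1 _) (Real.rpow_nonneg hw.2.1 _),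
      ← Real.rpow_mul hw.1.1, ← Real.rpow_mul hw.2.1]
  rw [integral_congr_ae hfac, integral_prod_mul (fun x : ℝ => x ^ ((1 - p) * r))
    (fun y : ℝ => y ^ (bval b * r)),
    integral_unitUniform_rpow (by nlinarith), integral_unitUniform_rpow
      (by nlinarith [bval_nonneg b])]

lemma integral_gfgmCdf_gfgmCoord {p : ℝ} (hp : p ∈ Ioo (0 : ℝ) 1) (b c : Bool) :
    ∫ w, gfgmCdf p c (gfgmCoord p b w) ∂(unitUniform.prod unitUniform)
      = tauFactor p (bval c) (bval b) := by
  obtain ⟨hp0, hp1⟩ := hp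
  have ha : 0 ≤ (1 - p)⁻¹ := inv_nonneg.2 (by linarith)
  have h2 : 2 - p ≠ 0 := by linarith
  cases c
  · simp only [gfgmCdf, Bool.false_eq_true, if_false]
    rw [integral_gfgmCoord_rpow hp1.le b ha]
    cases b <;> simp only [bval, tauFactor, Bool.false_eq_true, if_false, if_true] <;>
      field_simp <;> ring
  · simp only [gfgmCdf, if_true]
    have hint := integrable_gfgmCoord_rpow hp1.le b zero_le_one
    have hmean := integral_gfgmCoord_rpow hp1.le b zero_le_one
    simp only [Real.rpow_one] at hint hmean
    rw [integral_div, integral_sub hint ((integrable_gfgmCoord_rpow hp1.le b ha).const_mul _),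
      integral_const_mul, hmean, integral_gfgmCoord_rpow hp1.le b ha]
    cases b <;> simp only [bval, tauFactor, Bool.false_eq_true, if_false, if_true] <;>
      field_simp <;> ring

lemma gfgmCdf_nonneg {p : ℝ} (hp : p ∈ Ioo (0 : ℝ) 1) (b : Bool) {t : ℝ}
    (ht : t ∈ Icc (0 : ℝ) 1) : 0 ≤ gfgmCdf p b t := by
  obtain ⟨hp0, hp1⟩ := hp
  have hpow : 0 ≤ t ^ (1 - p)⁻¹ := Real.rpow_nonneg ht.1 _
  cases b
  · exact hpow
  · have hle : t ^ (1 - p)⁻¹ ≤ t :=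
      Real.rpow_le_self_of_le_one ht.1 ht.2 ((one_le_inv₀ (by linarith)).2 (by linarith))
    exact div_nonneg (by nlinarith) hp0.le

lemma gfgmCdf_le_one {p : ℝ} (hp : p ∈ Ioo (0 : ℝ) 1) (b : Bool) {t : ℝ}
    (ht : t ∈ Icc (0 : ℝ) 1) : gfgmCdf p b t ≤ 1 :=
  ENNReal.ofReal_le_one.1 (unitUniform_prod_gfgmCoord_le hp b ht ▸ prob_le_one)

lemma measureReal_gfgmCoord_le_gfgmCoord {p : ℝ} (hp : p ∈ Ioo (0 : ℝ) 1) (b c : Bool) :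
    ((unitUniform.prod unitUniform).prod (unitUniform.prod unitUniform)).real
      {w | gfgmCoord p c w.2 ≤ gfgmCoord p b w.1} = tauFactor p (bval c) (bval b) := by
  have hS : MeasurableSet {w : (ℝ × ℝ) × (ℝ × ℝ) | gfgmCoord p c w.2 ≤ gfgmCoord p b w.1} :=
    measurableSet_le (by fun_prop) (by fun_prop)
  have hmem : ∀ᵐ w ∂(unitUniform.prod unitUniform), gfgmCoord p b w ∈ Icc (0 : ℝ) 1 :=
    ae_mem_Icc_unitUniform_prod.mono fun w hw => gfgmCoord_mem_Icc hp.2.le b hw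
  have hslice : (fun w => (unitUniform.prod unitUniform)
        (Prod.mk w ⁻¹' {w : (ℝ × ℝ) × (ℝ × ℝ) | gfgmCoord p c w.2 ≤ gfgmCoord p b w.1}))
      =ᵐ[unitUniform.prod unitUniform] fun w => ENNReal.ofReal (gfgmCdf p c (gfgmCoord p b w)) :=
    hmem.mono fun w ht => unitUniform_prod_gfgmCoord_le hp c ht
  have hnonneg : 0 ≤ᵐ[unitUniform.prod unitUniform] fun w => gfgmCdf p c (gfgmCoord p b w) :=
    hmem.mono fun w ht => gfgmCdf_nonneg hp c ht
  have hmeas : Measurable fun w => gfgmCdf p c (gfgmCoord p b w) := by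
    have : Measurable (gfgmCoord p b) := by fun_prop
    unfold gfgmCdf; cases c <;> simp only [Bool.false_eq_true, if_false, if_true] <;> fun_prop
  have hint : Integrable (fun w => gfgmCdf p c (gfgmCoord p b w)) (unitUniform.prod unitUniform) :=
    Integrable.of_bound hmeas.aestronglyMeasurable 1 ((hmem.and hnonneg).mono fun w hw => by
      rw [Real.norm_eq_abs, abs_of_nonneg hw.2]; exact gfgmCdf_le_one hp c hw.1)
  rw [measureReal_def, Measure.prod_apply hS, lintegral_congr_ae hslice,
    ← ofReal_integral_eq_lintegral_ofReal hint hnonneg,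
    ENNReal.toReal_ofReal (integral_nonneg_of_ae hnonneg), integral_gfgmCdf_gfgmCoord hp]

def gfgmLeSet {ι : Type*} (p : ι → ℝ) :
    Set (((ι → Bool) × (ι → ℝ × ℝ)) × ((ι → Bool) × (ι → ℝ × ℝ))) :=
  {x | ∀ m, gfgmCoord (p m) (x.2.1 m) (x.2.2 m) ≤ gfgmCoord (p m) (x.1.1 m) (x.1.2 m)}

noncomputable abbrev uniformPairs (ι : Type*) [Fintype ι] : Measure (ι → ℝ × ℝ) :=
  Measure.pi fun _ => unitUniform.prod unitUniform

lemma measurableSet_gfgmLeSet {ι : Type*} [Countable ι] (p : ι → ℝ) :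
    MeasurableSet (gfgmLeSet p) := by
  simp only [gfgmLeSet, ofPred_forall]
  exact MeasurableSet.iInter fun m => measurableSet_le (by fun_prop) (by fun_prop)

lemma measureReal_uniformPairs_prod_gfgmLeSet {ι : Type*} [Fintype ι] {p : ι → ℝ}
    (hp : ∀ m, p m ∈ Ioo (0 : ℝ) 1) (i j : ι → Bool) :
    ((uniformPairs ι).prod (uniformPairs ι)).real {z | ((i, z.1), (j, z.2)) ∈ gfgmLeSet p}
      = ∏ m, tauFactor (p m) (bval (j m)) (bval (i m)) := by
  change ((uniformPairs ι).prod (uniformPairs ι)).real {z | ∀ m, (z.1 m, z.2 m) ∈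
    {w : (ℝ × ℝ) × (ℝ × ℝ) | gfgmCoord (p m) (j m) w.2 ≤ gfgmCoord (p m) (i m) w.1}} = _
  rw [measureReal_def, Measure.pi_prod_pi_setOf_forall _ _ fun m => measurableSet_le
    (by fun_prop) (by fun_prop), ENNReal.toReal_prod]
  exact Finset.prod_congr rfl fun m _ => measureReal_gfgmCoord_le_gfgmCoord (hp m) (i m) (j m)

lemma measureReal_prod_gfgmLeSet {ι : Type*} [Fintype ι] [DecidableEq ι] {p : ι → ℝ}
    (hp : ∀ m, p m ∈ Ioo (0 : ℝ) 1) (ν ν' : Measure (ι → Bool)) [IsFiniteMeasure ν]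
    [IsFiniteMeasure ν'] :
    ((ν.prod (uniformPairs ι)).prod (ν'.prod (uniformPairs ι))).real (gfgmLeSet p)
      = ∑ i, ∑ j, ν.real {i} * ν'.real {j} * ∏ m, tauFactor (p m) (bval (j m)) (bval (i m)) := by
  simp only [Measure.real_prod_prod_prod_apply_of_fintype _ _ _ _ (measurableSet_gfgmLeSet p),
    measureReal_uniformPairs_prod_gfgmLeSet hp]

theorem gfgm_kendall_tau_general
    {Ω : Type*} [MeasurableSpace Ω] (P : Measure Ω) [IsProbabilityMeasure P]
    {Ω' : Type*} [MeasurableSpace Ω'] (P' : Measure Ω') [IsProbabilityMeasure P']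
    (d : ℕ) (p : Fin d → ℝ) (hp : ∀ m, p m ∈ Ioo (0 : ℝ) 1)
    (f : (Fin d → Bool) → ℝ) (hf0 : ∀ i, 0 ≤ f i)
    (I : Ω → Fin d → Bool) (U₀ U₁ : Fin d → Ω → ℝ)
    (I' : Ω' → Fin d → Bool) (U₀' U₁' : Fin d → Ω' → ℝ)
    (hI : Measurable I) (hU₀ : ∀ m, Measurable (U₀ m)) (hU₁ : ∀ m, Measurable (U₁ m))
    (hI' : Measurable I') (hU₀' : ∀ m, Measurable (U₀' m)) (hU₁' : ∀ m, Measurable (U₁' m))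
    (hU₀law : ∀ m, P.map (U₀ m) = volume.restrict (Icc (0 : ℝ) 1))
    (hU₁law : ∀ m, P.map (U₁ m) = volume.restrict (Icc (0 : ℝ) 1))
    (hU₀law' : ∀ m, P'.map (U₀' m) = volume.restrict (Icc (0 : ℝ) 1))
    (hU₁law' : ∀ m, P'.map (U₁' m) = volume.restrict (Icc (0 : ℝ) 1))
    (hIpmf : ∀ i : Fin d → Bool, P {ω | I ω = i} = ENNReal.ofReal (f i))
    (hIpmf' : ∀ i : Fin d → Bool, P' {ω | I' ω = i} = ENNReal.ofReal (f i))
    (hiid : iIndepFun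
      (Sum.elim U₀ U₁) P)
    (hIU : IndepFun I (fun ω j => Sum.elim U₀ U₁ j ω) P)
    (hiid' : iIndepFun
      (Sum.elim U₀' U₁') P')
    (hIU' : IndepFun I' (fun ω j => Sum.elim U₀' U₁' j ω) P') :
    ((P.prod P') {q : Ω × Ω' | ∀ m,
        U₀' m q.2 ^ (1 - p m) * U₁' m q.2 ^ bval (I' q.2 m)
          ≤ U₀ m q.1 ^ (1 - p m) * U₁ m q.1 ^ bval (I q.1 m)}).toReal
      = ∑ i : Fin d → Bool, ∑ j : Fin d → Bool, f i * f j *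
          ∏ m, (1 / 2 - (bval (i m) + bval (j m)) / (2 * p m)
            + (bval (j m) * (1 - p m) + bval (i m)) / (p m * (2 - p m)))
    ∧ (1 / ((2 : ℝ) ^ (d - 1) - 1)) *
        ((2 : ℝ) ^ d * ((P.prod P') {q : Ω × Ω' | ∀ m,
          U₀' m q.2 ^ (1 - p m) * U₁' m q.2 ^ bval (I' q.2 m)
            ≤ U₀ m q.1 ^ (1 - p m) * U₁ m q.1 ^ bval (I q.1 m)}).toReal - 1)
      = (1 / ((2 : ℝ) ^ (d - 1) - 1)) *
          ((2 : ℝ) ^ d * (∑ i : Fin d → Bool, ∑ j : Fin d → Bool, f i * f j *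
            ∏ m, (1 / 2 - (bval (i m) + bval (j m)) / (2 * p m)
              + (bval (j m) * (1 - p m) + bval (i m)) / (p m * (2 - p m)))) - 1) := by
  have hlaw : P.map (fun ω => (I ω, fun m => (U₀ m ω, U₁ m ω)))
      = (P.map I).prod (uniformPairs (Fin d)) := by
    rw [hIU.map_prod_pair_eq_prod_pi hI hU₀ hU₁ hiid]
    simp_rw [hU₀law, hU₁law]
  have hlaw' : P'.map (fun ω => (I' ω, fun m => (U₀' m ω, U₁' m ω)))
      = (P'.map I').prod (uniformPairs (Fin d)) := by
    rw [hIU'.map_prod_pair_eq_prod_pi hI' hU₀' hU₁' hiid']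
    simp_rw [hU₀law', hU₁law']
  have hpmf : ∀ i, (P.map I).real {i} = f i := fun i => by
    rw [measureReal_def, Measure.map_apply hI (measurableSet_singleton i)]
    exact (congrArg ENNReal.toReal (hIpmf i)).trans (ENNReal.toReal_ofReal (hf0 i))
  have hpmf' : ∀ i, (P'.map I').real {i} = f i := fun i => by
    rw [measureReal_def, Measure.map_apply hI' (measurableSet_singleton i)]
    exact (congrArg ENNReal.toReal (hIpmf' i)).trans (ENNReal.toReal_ofReal (hf0 i))
  refine (fun hprob => ⟨hprob, by rw [hprob]⟩) ?_
  calc _ = (((P.map I).prod (uniformPairs (Fin d))).prod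
        ((P'.map I').prod (uniformPairs (Fin d)))).real (gfgmLeSet p) := by
        rw [← hlaw, ← hlaw', Measure.map_prod_map _ _ (by fun_prop) (by fun_prop),
          measureReal_def, Measure.map_apply (by fun_prop) (measurableSet_gfgmLeSet p)]
        rfl
    _ = ∑ i, ∑ j, f i * f j * ∏ m, tauFactor (p m) (bval (j m)) (bval (i m)) := by
        simp only [measureReal_prod_gfgmLeSet hp, hpmf, hpmf']
    -- the paper's summand has `i` and `j` exchanged, which the symmetric double sum absorbs
    _ = ∑ i, ∑ j, f i * f j * ∏ m, tauFactor (p m) (bval (i m)) (bval (j m)) := by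
        rw [Finset.sum_comm]
        exact Finset.sum_congr rfl fun i _ => Finset.sum_congr rfl fun j _ => by ring

/-- Fix `d ≥ 2` and `p ∈ (0,1)^d`.  Let `U` and `U'` be independent copies (realized on a
product probability space) constructed via the GFGM representation from a Bernoulli
vector with pmf `f`.  Then
`P(U' ≤ U) = Σ_{i,j} f(i) f(j) Π_m (1/2 - (i_m+j_m)/(2p_m) + (j_m(1-p_m)+i_m)/(p_m(2-p_m)))`,
and consequently Kendall's tau equals
`τ = (1/(2^{d-1}-1)) (2^d Σ_{i,j} f(i)f(j) Π_m (…) - 1)`. -/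
theorem gfgm_kendall_tau
    {Ω : Type*} [MeasurableSpace Ω] (P : Measure Ω) [IsProbabilityMeasure P]
    {Ω' : Type*} [MeasurableSpace Ω'] (P' : Measure Ω') [IsProbabilityMeasure P']
    (d : ℕ) (hd : 2 ≤ d) (p : Fin d → ℝ) (hp : ∀ m, p m ∈ Ioo (0 : ℝ) 1)
    (f : (Fin d → Bool) → ℝ) (hf0 : ∀ i, 0 ≤ f i) (hf1 : ∑ i : Fin d → Bool, f i = 1)
    (hmarg : ∀ m, ∑ i ∈ Finset.univ.filter (fun i : Fin d → Bool => i m = true), f i = p m)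
    (I : Ω → Fin d → Bool) (U₀ U₁ : Fin d → Ω → ℝ)
    (I' : Ω' → Fin d → Bool) (U₀' U₁' : Fin d → Ω' → ℝ)
    (hI : Measurable I) (hU₀ : ∀ m, Measurable (U₀ m)) (hU₁ : ∀ m, Measurable (U₁ m))
    (hI' : Measurable I') (hU₀' : ∀ m, Measurable (U₀' m)) (hU₁' : ∀ m, Measurable (U₁' m))
    (hU₀law : ∀ m, P.map (U₀ m) = volume.restrict (Icc (0 : ℝ) 1))
    (hU₁law : ∀ m, P.map (U₁ m) = volume.restrict (Icc (0 : ℝ) 1))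
    (hU₀law' : ∀ m, P'.map (U₀' m) = volume.restrict (Icc (0 : ℝ) 1))
    (hU₁law' : ∀ m, P'.map (U₁' m) = volume.restrict (Icc (0 : ℝ) 1))
    (hIpmf : ∀ i : Fin d → Bool, P {ω | I ω = i} = ENNReal.ofReal (f i))
    (hIpmf' : ∀ i : Fin d → Bool, P' {ω | I' ω = i} = ENNReal.ofReal (f i))
    (hiid : iIndepFun
      (Sum.elim U₀ U₁) P)
    (hIU : IndepFun I (fun ω j => Sum.elim U₀ U₁ j ω) P)
    (hiid' : iIndepFun
      (Sum.elim U₀' U₁') P')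
    (hIU' : IndepFun I' (fun ω j => Sum.elim U₀' U₁' j ω) P') :
    ((P.prod P') {q : Ω × Ω' | ∀ m,
        U₀' m q.2 ^ (1 - p m) * U₁' m q.2 ^ bval (I' q.2 m)
          ≤ U₀ m q.1 ^ (1 - p m) * U₁ m q.1 ^ bval (I q.1 m)}).toReal
      = ∑ i : Fin d → Bool, ∑ j : Fin d → Bool, f i * f j *
          ∏ m, (1 / 2 - (bval (i m) + bval (j m)) / (2 * p m)
            + (bval (j m) * (1 - p m) + bval (i m)) / (p m * (2 - p m)))
    ∧ (1 / ((2 : ℝ) ^ (d - 1) - 1)) *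
        ((2 : ℝ) ^ d * ((P.prod P') {q : Ω × Ω' | ∀ m,
          U₀' m q.2 ^ (1 - p m) * U₁' m q.2 ^ bval (I' q.2 m)
            ≤ U₀ m q.1 ^ (1 - p m) * U₁ m q.1 ^ bval (I q.1 m)}).toReal - 1)
      = (1 / ((2 : ℝ) ^ (d - 1) - 1)) *
          ((2 : ℝ) ^ d * (∑ i : Fin d → Bool, ∑ j : Fin d → Bool, f i * f j *
            ∏ m, (1 / 2 - (bval (i m) + bval (j m)) / (2 * p m)
              + (bval (j m) * (1 - p m) + bval (i m)) / (p m * (2 - p m)))) - 1) :=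
  gfgm_kendall_tau_general P P' d p hp f hf0 I U₀ U₁ I' U₀' U₁' hI hU₀ hU₁ hI' hU₀' hU₁' hU₀law
    hU₁law hU₀law' hU₁law' hIpmf hIpmf' hiid hIU hiid' hIU'
end

section
/- Fix d ≥ 2 and p ∈ (0,1), and let f be the pmf on {0,1}^d with f((0,…,0)) = 1-p, f((1,…,1)) = p, and f(i) = 0 otherwise (the comonotonic Bernoulli vector with all margins p). Then Spearman's rho derived from average lower orthant dependence of the corresponding GFGM copula C_f equals ρ^{cL} = ((d+1)/(2^d - d - 1))·( (2/(2-p))^d·( (1-p)·(1-p)^d + p·((3-2p)/2)^d ) - 1 ). -/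
/-!
Only the two constant vertices carry mass, so `C_f(u) = (1-p) ∏ g₀(u_m) + p ∏ g₁(u_m)` with
`g₀(x) = x^{1/(1-p)}` and `g₁(x) = g₀(x) - (g₀(x) - x)/p`. By Fubini each product integrates
over the unit cube to the `d`-th power of a one-dimensional integral, and
`∫₀¹ g₀ = (1-p)/(2-p)`, `∫₀¹ g₁ = (3-2p)/(2(2-p))`; factoring out `(2/(2-p))^d` gives the formula.
-/

open MeasureTheory ProbabilityTheory Set

section Pi

variable {ι : Type*} [Fintype ι]

theorem setIntegral_Icc_pi_prod_eq_pow (g : ℝ → ℝ) (a b : ℝ) :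
    ∫ u in Icc (fun _ : ι => a) (fun _ => b), ∏ m, g (u m)
      = (∫ x in Icc a b, g x) ^ Fintype.card ι := by
  rw [← pi_univ_Icc, volume_pi, Measure.restrict_pi_pi, integral_fintype_prod_eq_pow]

theorem sum_ite_const_false_true [DecidableEq ι] [Nonempty ι] (α β : ℝ) (F : (ι → Bool) → ℝ) :
    ∑ i, (if i = (fun _ => false) then α else if i = (fun _ => true) then β else 0) * F i
      = α * F (fun _ => false) + β * F (fun _ => true) := by
  have hne : (fun _ : ι => false) ≠ (fun _ => true) := fun h =>
    Bool.false_ne_true (congrFun h (Classical.arbitrary ι))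
  refine (Fintype.sum_eq_add _ _ hne fun i ⟨hi₀, hi₁⟩ => ?_).trans ?_
  · simp only [if_neg hi₀, if_neg hi₁, zero_mul]
  · simp only [if_pos, if_neg hne.symm]

end Pi

theorem setIntegral_Icc_zero_one_rpow {r : ℝ} (hr : -1 < r) :
    ∫ x in Icc (0 : ℝ) 1, x ^ r = 1 / (r + 1) := by
  rw [integral_Icc_eq_integral_Ioc, ← intervalIntegral.integral_of_le zero_le_one,
    integral_rpow (Or.inl hr), Real.one_rpow, Real.zero_rpow (by linarith), sub_zero]

theorem integral_gfgmFactor_false {p : ℝ} (hp : p < 1) :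
    ∫ x in Icc (0 : ℝ) 1, gfgmFactor p false x = (1 - p) / (2 - p) := by
  have h1p : 0 < 1 - p := by linarith
  simp only [gfgmFactor, bval, Bool.false_eq_true, if_false, zero_mul, sub_zero]
  rw [setIntegral_Icc_zero_one_rpow (by linarith [inv_pos.2 h1p])]
  have : 2 - p ≠ 0 := by linarith
  field_simp
  ring

theorem continuous_rpow_inv_one_sub {p : ℝ} (hp : p < 1) :
    Continuous fun x : ℝ => x ^ (1 - p)⁻¹ :=
  Real.continuous_rpow_const (inv_nonneg.2 (by linarith))

theorem integral_gfgmFactor_true {p : ℝ} (hp0 : 0 < p) (hp1 : p < 1) :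
    ∫ x in Icc (0 : ℝ) 1, gfgmFactor p true x = (3 - 2 * p) / (2 * (2 - p)) := by
  have hpow := (continuous_rpow_inv_one_sub hp1).integrableOn_Icc (μ := volume) (a := 0) (b := 1)
  have hid : IntegrableOn (fun x : ℝ => x) (Icc 0 1) := continuous_id.integrableOn_Icc
  have h1 : ∫ x in Icc (0 : ℝ) 1, x ^ (1 - p)⁻¹ = (1 - p) / (2 - p) := by
    simpa [gfgmFactor, bval] using integral_gfgmFactor_false hp1
  have h2 : ∫ x in Icc (0 : ℝ) 1, x = 1 / 2 := by
    rw [integral_Icc_eq_integral_Ioc, ← intervalIntegral.integral_of_le zero_le_one, integral_id]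
    norm_num
  have hdiff : IntegrableOn (fun x : ℝ => (x ^ (1 - p)⁻¹ - x) / p) (Icc 0 1) :=
    (hpow.sub hid).div_const p
  simp only [gfgmFactor, bval, if_true, one_mul]
  rw [integral_sub hpow hdiff, integral_div, integral_sub hpow hid, h1, h2]
  have : 2 - p ≠ 0 := by linarith
  field_simp
  ring

theorem setIntegral_gfgm_comonotonic {d : ℕ} (hd : d ≠ 0) {p : ℝ} (hp0 : 0 < p) (hp1 : p < 1)
    (f : (Fin d → Bool) → ℝ)
    (hf : ∀ i, f i = if i = (fun _ => false) then 1 - p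
      else if i = (fun _ => true) then p else 0) :
    ∫ u in Icc (0 : Fin d → ℝ) 1, ∑ i, f i * ∏ m, gfgmFactor p (i m) (u m)
      = (1 - p) * ((1 - p) / (2 - p)) ^ d + p * ((3 - 2 * p) / (2 * (2 - p))) ^ d := by
  have : Nonempty (Fin d) := ⟨⟨0, Nat.pos_of_ne_zero hd⟩⟩
  have hint (b : Bool) : IntegrableOn (fun u : Fin d → ℝ => ∏ m, gfgmFactor p b (u m))
      (Icc 0 1) :=
    (continuous_finsetProd _ fun m _ =>
      (continuous_gfgmFactor hp1 b).comp (continuous_apply m)).integrableOn_Icc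
  have hbox (b : Bool) : ∫ u in Icc (0 : Fin d → ℝ) 1, ∏ m, gfgmFactor p b (u m)
      = (∫ x in Icc (0 : ℝ) 1, gfgmFactor p b x) ^ d :=
    (setIntegral_Icc_pi_prod_eq_pow _ 0 1).trans (by rw [Fintype.card_fin])
  simp_rw [hf, sum_ite_const_false_true]
  rw [integral_add ((hint false).const_mul _) ((hint true).const_mul _), integral_const_mul,
    integral_const_mul, hbox, hbox, integral_gfgmFactor_false hp1,
    integral_gfgmFactor_true hp0 hp1]

/-- Fix `d ≥ 2` and `p ∈ (0,1)`, and let `f` be the pmf of the comonotonic Bernoulli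
vector with all margins `p`.  Then Spearman's rho from average lower orthant dependence
of the corresponding GFGM copula equals
`ρ^{cL} = ((d+1)/(2^d-d-1)) ((2/(2-p))^d ((1-p)(1-p)^d + p((3-2p)/2)^d) - 1)`. -/
theorem gfgm_epd_rho_cL
    (d : ℕ) (hd : 2 ≤ d) (p : ℝ) (hp : p ∈ Ioo (0 : ℝ) 1)
    (f : (Fin d → Bool) → ℝ)
    (hf : ∀ i, f i = if i = (fun _ => false) then 1 - p
      else if i = (fun _ => true) then p else 0) :
    ((d : ℝ) + 1) / (2 ^ d - d - 1) *
        ((2 : ℝ) ^ d * (∫ u in Icc (0 : Fin d → ℝ) 1, ∑ i : Fin d → Bool,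
          f i * ∏ m, (u m ^ (1 - p)⁻¹ - bval (i m) * ((u m ^ (1 - p)⁻¹ - u m) / p))) - 1)
      = ((d : ℝ) + 1) / (2 ^ d - d - 1) *
          ((2 / (2 - p)) ^ d * ((1 - p) * (1 - p) ^ d + p * ((3 - 2 * p) / 2) ^ d) - 1) := by
  obtain ⟨hp0, hp1⟩ := hp
  have hint := setIntegral_gfgm_comonotonic (by omega) hp0 hp1 f hf
  simp only [gfgmFactor] at hint
  rw [hint]
  have : 2 - p ≠ 0 := by linarith
  congr 2
  simp only [div_pow, mul_pow]
  field_simp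
end

section
/- Let p₁, p₂ ∈ (0,1), θ ∈ ℝ, and define f₀₀ = (1-p₁)(1-p₂) + p₁p₂θ, f₀₁ = (1-p₁)p₂ - p₁p₂θ, f₁₀ = p₁(1-p₂) - p₁p₂θ, f₁₁ = p₁p₂ + p₁p₂θ. Then for all u, v ∈ [0,1], with a₁ = 1/(1-p₁) and a₂ = 1/(1-p₂), Σ_{i∈{0,1}} Σ_{j∈{0,1}} f_{ij} · ( u^{a₁} - i·(u^{a₁}-u)/p₁ ) · ( v^{a₂} - j·(v^{a₂}-v)/p₂ ) = u·v·( 1 + θ·( 1 - u^{p₁/(1-p₁)} )·( 1 - v^{p₂/(1-p₂)} ) ). -/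
/-! The pmf is the product of its margins plus `θ p₁ p₂` times the product of the signs
`(-1)^i (-1)^j`, so the double sum splits into a product of two marginal sums (each
collapsing to `u`, resp. `v`) plus `θ p₁ p₂` times a product of two signed sums (each
equal to `(u^{a₁} - u) / p₁`, resp. `(v^{a₂} - v) / p₂`). Finally
`u^{1/(1-p)} = u · u^{p/(1-p)}`. -/

open MeasureTheory ProbabilityTheory Set

lemma Real.rpow_inv_one_sub_eq_mul {x p : ℝ} (hx : 0 ≤ x) (hp : p ≠ 1) :
    x ^ (1 - p)⁻¹ = x * x ^ (p / (1 - p)) := by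
  have h : 1 - p ≠ 0 := sub_ne_zero.mpr hp.symm
  have hsplit : (1 - p)⁻¹ = 1 + p / (1 - p) := by field_simp; ring
  rw [hsplit, Real.rpow_add' hx (hsplit ▸ inv_ne_zero h), Real.rpow_one]

lemma Finset.sum_sum_add_mul_mul {ι κ R : Type*} [Fintype ι] [Fintype κ] [CommSemiring R]
    (m s A : ι → R) (n t B : κ → R) (c : R) :
    ∑ i, ∑ j, (m i * n j + c * (s i * t j)) * A i * B j
      = (∑ i, m i * A i) * (∑ j, n j * B j) + c * ((∑ i, s i * A i) * (∑ j, t j * B j)) := by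
  rw [Finset.sum_mul_sum, Finset.sum_mul_sum, Finset.mul_sum, ← Finset.sum_add_distrib]
  refine Finset.sum_congr rfl fun i _ => ?_
  rw [Finset.mul_sum, ← Finset.sum_add_distrib]
  exact Finset.sum_congr rfl fun j _ => by ring

def bernoulliMass (p : ℝ) : Bool → ℝ
  | false => 1 - p
  | true => p

def bernoulliSign : Bool → ℝ
  | false => 1
  | true => -1

lemma sum_bernoulliMass_mul_sub_bval {p : ℝ} (hp : p ≠ 0) (x y : ℝ) :
    ∑ i, bernoulliMass p i * (x - bval i * ((x - y) / p)) = y := by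
  simp only [Fintype.sum_bool, bernoulliMass, bval, if_true, Bool.false_eq_true, if_false]
  field_simp
  ring

lemma sum_bernoulliSign_mul_sub_bval (p x y : ℝ) :
    ∑ i, bernoulliSign i * (x - bval i * ((x - y) / p)) = (x - y) / p := by
  simp only [Fintype.sum_bool, bernoulliSign, bval, if_true, Bool.false_eq_true, if_false]
  ring

/-- Let `p₁, p₂ ∈ (0,1)`, `θ ∈ ℝ`, and let `(f₀₀, f₀₁, f₁₀, f₁₁)` be the bivariate
Bernoulli pmf with margins `p₁, p₂` and dependence parameter `θ`.  Then for `u, v ∈ [0,1]`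
the bivariate GFGM copula equals the asymmetric modified Huang–Kotz FGM copula
`u v (1 + θ (1 - u^{p₁/(1-p₁)}) (1 - v^{p₂/(1-p₂)}))`. -/
theorem bivariate_gfgm_is_huang_kotz
    (p₁ p₂ θ : ℝ) (hp₁ : p₁ ∈ Ioo (0 : ℝ) 1) (hp₂ : p₂ ∈ Ioo (0 : ℝ) 1)
    (f : Bool → Bool → ℝ)
    (hf00 : f false false = (1 - p₁) * (1 - p₂) + p₁ * p₂ * θ)
    (hf01 : f false true = (1 - p₁) * p₂ - p₁ * p₂ * θ)
    (hf10 : f true false = p₁ * (1 - p₂) - p₁ * p₂ * θ)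
    (hf11 : f true true = p₁ * p₂ + p₁ * p₂ * θ)
    (u v : ℝ) (hu : u ∈ Icc (0 : ℝ) 1) (hv : v ∈ Icc (0 : ℝ) 1) :
    ∑ i : Bool, ∑ j : Bool, f i j *
        (u ^ (1 - p₁)⁻¹ - bval i * ((u ^ (1 - p₁)⁻¹ - u) / p₁)) *
        (v ^ (1 - p₂)⁻¹ - bval j * ((v ^ (1 - p₂)⁻¹ - v) / p₂))
      = u * v * (1 + θ * (1 - u ^ (p₁ / (1 - p₁))) * (1 - v ^ (p₂ / (1 - p₂)))) := by
  have hp₁0 : p₁ ≠ 0 := hp₁.1.ne'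
  have hp₂0 : p₂ ≠ 0 := hp₂.1.ne'
  have hf : f = fun i j => bernoulliMass p₁ i * bernoulliMass p₂ j
      + p₁ * p₂ * θ * (bernoulliSign i * bernoulliSign j) := by
    funext i j
    cases i <;> cases j <;>
      simp only [bernoulliMass, bernoulliSign, hf00, hf01, hf10, hf11] <;> ring
  rw [hf, Finset.sum_sum_add_mul_mul, sum_bernoulliMass_mul_sub_bval hp₁0,
    sum_bernoulliMass_mul_sub_bval hp₂0, sum_bernoulliSign_mul_sub_bval,
    sum_bernoulliSign_mul_sub_bval, Real.rpow_inv_one_sub_eq_mul hu.1 hp₁.2.ne,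
    Real.rpow_inv_one_sub_eq_mul hv.1 hp₂.2.ne]
  field_simp
  ring
end

section
/- Let p₁, p₂ ∈ (0,1) and let θ ∈ ℝ satisfy -min(1, (1-p₁)(1-p₂)/(p₁p₂)) ≤ θ ≤ min((1-p₁)/p₁, (1-p₂)/p₂). Define C(u,v) = u·v·( 1 + θ·( 1 - u^{p₁/(1-p₁)} )·( 1 - v^{p₂/(1-p₂)} ) ) for (u,v) ∈ [0,1]². Then C is a bivariate copula: C(u,0) = C(0,v) = 0, C(u,1) = u, C(1,v) = v for all u, v ∈ [0,1], and C(u₂,v₂) - C(u₁,v₂) - C(u₂,v₁) + C(u₁,v₁) ≥ 0 for all 0 ≤ u₁ ≤ u₂ ≤ 1 and 0 ≤ v₁ ≤ v₂ ≤ 1. -/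
open MeasureTheory ProbabilityTheory Set

lemma rpow_lipschitz (c : ℝ) (hc : 1 ≤ c) {x y : ℝ}
    (hx : x ∈ Icc (0:ℝ) 1) (hy : y ∈ Icc (0:ℝ) 1) :
    |y ^ c - x ^ c| ≤ c * |y - x| := by
  have := (convex_Icc (0:ℝ) 1).norm_image_sub_le_of_norm_hasDerivWithin_le
    (f := fun t => t ^ c) (f' := fun t => c * t ^ (c - 1)) (C := c)
    (fun t ht => (Real.hasDerivAt_rpow_const (Or.inr hc)).hasDerivWithinAt)
    (fun t ht => by
      have h1 : t ^ (c - 1) ≤ 1 := Real.rpow_le_one ht.1 ht.2 (by linarith)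
      have h0 : (0:ℝ) ≤ t ^ (c - 1) := Real.rpow_nonneg ht.1 _
      have : |c * t ^ (c - 1)| = c * t ^ (c-1) := abs_of_nonneg (by positivity)
      rw [Real.norm_eq_abs, this]
      nlinarith) hx hy
  simpa [Real.norm_eq_abs] using this

lemma incr_bounds (a : ℝ) (ha : 0 < a) {x y : ℝ}
    (hx : 0 ≤ x) (hxy : x ≤ y) (hy : y ≤ 1) :
    -a * (y - x) ≤ y * (1 - y ^ a) - x * (1 - x ^ a) ∧
      y * (1 - y ^ a) - x * (1 - x ^ a) ≤ y - x := by
  have hy0 : 0 ≤ y := hx.trans hxy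
  have hx1 : x ≤ 1 := hxy.trans hy
  have hrw : ∀ t : ℝ, 0 ≤ t → t * (1 - t ^ a) = t - t ^ (1 + a) := by
    intro t ht
    rw [Real.rpow_add' ht (by linarith), Real.rpow_one]; ring
  rw [hrw x hx, hrw y hy0]
  have hmono : x ^ (1 + a) ≤ y ^ (1 + a) :=
    Real.rpow_le_rpow hx hxy (by linarith)
  have hlip : |y ^ (1 + a) - x ^ (1 + a)| ≤ (1 + a) * |y - x| :=
    rpow_lipschitz (1 + a) (by linarith) ⟨hx, hx1⟩ ⟨hy0, hy⟩
  rw [abs_of_nonneg (by linarith), abs_of_nonneg (by linarith)] at hlip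
  constructor <;> nlinarith

lemma core_ineq (A B x y a b θ : ℝ) (hA : 0 ≤ A) (hB : 0 ≤ B)
    (ha : 0 < a) (hb : 0 < b)
    (hx1 : -a * A ≤ x) (hx2 : x ≤ A) (hy1 : -b * B ≤ y) (hy2 : y ≤ B)
    (ht1 : θ * a ≤ 1) (ht2 : θ * b ≤ 1) (ht3 : -θ ≤ 1) (ht4 : -θ * (a * b) ≤ 1) :
    0 ≤ A * B + θ * x * y := by
  rcases le_or_gt 0 θ with hθ | hθ
  · rcases le_or_gt 0 x with hxs | hxs <;> rcases le_or_gt 0 y with hys | hys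
    · nlinarith [mul_nonneg (mul_nonneg hθ hxs) hys, mul_nonneg hA hB]
    · have h2 : θ * x * (-y) ≤ θ * x * (b * B) :=
        mul_le_mul_of_nonneg_left (by linarith) (mul_nonneg hθ hxs)
      have h4 : θ * b * (x * B) ≤ 1 * (A * B) :=
        mul_le_mul ht2 (mul_le_mul_of_nonneg_right hx2 hB)
          (mul_nonneg hxs hB) zero_le_one
      nlinarith [h2, h4]
    · have h2 : θ * (-x) * y ≤ θ * (-x) * (B) :=
        mul_le_mul_of_nonneg_left hy2 (mul_nonneg hθ (by linarith))
      have h4 : θ * a * (A * B) ≤ 1 * (A * B) :=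
        mul_le_mul_of_nonneg_right ht1 (mul_nonneg hA hB)
      have h5 : θ * (-x) * B ≤ θ * (a * A) * B :=
        mul_le_mul_of_nonneg_right
          (mul_le_mul_of_nonneg_left (by linarith) hθ) hB
      nlinarith [h2, h4, h5]
    · nlinarith [mul_nonneg (mul_nonneg hθ (by linarith : (0:ℝ) ≤ -x)) (by linarith : (0:ℝ) ≤ -y), mul_nonneg hA hB]
  · rcases le_or_gt 0 x with hxs | hxs <;> rcases le_or_gt 0 y with hys | hys
    · have h1 : x * y ≤ A * B := mul_le_mul hx2 hy2 hys hA
      have h2 : -θ * (x * y) ≤ 1 * (A * B) :=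
        mul_le_mul ht3 h1 (mul_nonneg hxs hys) zero_le_one
      nlinarith [h2]
    · nlinarith [mul_nonneg (mul_pos_of_neg_of_neg hθ hys).le hxs, mul_nonneg hA hB]
    · nlinarith [mul_nonneg (mul_pos_of_neg_of_neg hθ hxs).le hys, mul_nonneg hA hB]
    · have hxy : (-x) * (-y) ≤ (a * A) * (b * B) :=
        mul_le_mul (by linarith) (by linarith) (by linarith)
          (mul_nonneg ha.le hA)
      have h5 : -θ * ((-x) * (-y)) ≤ -θ * ((a * A) * (b * B)) :=
        mul_le_mul_of_nonneg_left hxy (by linarith)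
      have h6 : -θ * (a * b) * (A * B) ≤ 1 * (A * B) :=
        mul_le_mul_of_nonneg_right ht4 (mul_nonneg hA hB)
      nlinarith [h5, h6]

/-- Let `p₁, p₂ ∈ (0,1)` and `θ` satisfy
`-min(1, (1-p₁)(1-p₂)/(p₁p₂)) ≤ θ ≤ min((1-p₁)/p₁, (1-p₂)/p₂)`.  Then
`C(u,v) = u v (1 + θ (1 - u^{p₁/(1-p₁)}) (1 - v^{p₂/(1-p₂)}))` is a bivariate copula:
it satisfies the boundary conditions and the 2-increasing (rectangle) inequality. -/
theorem huang_kotz_is_copula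
    (p₁ p₂ θ : ℝ) (hp₁ : p₁ ∈ Ioo (0 : ℝ) 1) (hp₂ : p₂ ∈ Ioo (0 : ℝ) 1)
    (hθl : -min 1 ((1 - p₁) * (1 - p₂) / (p₁ * p₂)) ≤ θ)
    (hθr : θ ≤ min ((1 - p₁) / p₁) ((1 - p₂) / p₂))
    (C : ℝ → ℝ → ℝ)
    (hC : ∀ u v, C u v
      = u * v * (1 + θ * (1 - u ^ (p₁ / (1 - p₁))) * (1 - v ^ (p₂ / (1 - p₂))))) :
    (∀ u ∈ Icc (0 : ℝ) 1, C u 0 = 0) ∧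
    (∀ v ∈ Icc (0 : ℝ) 1, C 0 v = 0) ∧
    (∀ u ∈ Icc (0 : ℝ) 1, C u 1 = u) ∧
    (∀ v ∈ Icc (0 : ℝ) 1, C 1 v = v) ∧
    (∀ u₁ u₂ v₁ v₂ : ℝ, 0 ≤ u₁ → u₁ ≤ u₂ → u₂ ≤ 1 → 0 ≤ v₁ → v₁ ≤ v₂ → v₂ ≤ 1 →
      0 ≤ C u₂ v₂ - C u₁ v₂ - C u₂ v₁ + C u₁ v₁) := by
  obtain ⟨hp₁0, hp₁1⟩ := hp₁
  obtain ⟨hp₂0, hp₂1⟩ := hp₂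
  set a := p₁ / (1 - p₁) with ha_def
  set b := p₂ / (1 - p₂) with hb_def
  have ha : 0 < a := div_pos hp₁0 (by linarith)
  have hb : 0 < b := div_pos hp₂0 (by linarith)
  refine ⟨fun u hu => by rw [hC]; ring,
    fun v hv => by rw [hC]; ring,
    fun u hu => by rw [hC]; simp [Real.one_rpow],
    fun v hv => by rw [hC]; simp [Real.one_rpow],
    fun u₁ u₂ v₁ v₂ hu1 hu12 hu2 hv1 hv12 hv2 => ?_⟩
  -- θ bounds in terms of a, b
  have hne1 : (1 : ℝ) - p₁ ≠ 0 := by linarith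
  have hne2 : (1 : ℝ) - p₂ ≠ 0 := by linarith
  have hne3 : p₁ ≠ 0 := ne_of_gt hp₁0
  have hne4 : p₂ ≠ 0 := ne_of_gt hp₂0
  have hab1 : (1 - p₁) / p₁ * a = 1 := by
    rw [ha_def]; field_simp
  have hab2 : (1 - p₂) / p₂ * b = 1 := by
    rw [hb_def]; field_simp
  have hta : θ * a ≤ 1 := by
    calc θ * a ≤ (1 - p₁) / p₁ * a :=
          mul_le_mul_of_nonneg_right (le_min_iff.mp hθr).1 ha.le
      _ = 1 := hab1
  have htb : θ * b ≤ 1 := by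
    calc θ * b ≤ (1 - p₂) / p₂ * b :=
          mul_le_mul_of_nonneg_right (le_min_iff.mp hθr).2 hb.le
      _ = 1 := hab2
  have hmin := neg_le.mp hθl
  have ht3 : -θ ≤ 1 := le_trans hmin (min_le_left _ _)
  have ht4 : -θ * (a * b) ≤ 1 := by
    have h := le_trans hmin (min_le_right _ _)
    have habmul : (1 - p₁) * (1 - p₂) / (p₁ * p₂) * (a * b) = 1 := by
      rw [ha_def, hb_def]; field_simp
    calc -θ * (a * b) ≤ (1 - p₁) * (1 - p₂) / (p₁ * p₂) * (a * b) :=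
          mul_le_mul_of_nonneg_right h (by positivity)
      _ = 1 := habmul
  -- rectangle
  have hFu := incr_bounds a ha hu1 hu12 hu2
  have hGv := incr_bounds b hb hv1 hv12 hv2
  have hcore := core_ineq (u₂ - u₁) (v₂ - v₁)
    (u₂ * (1 - u₂ ^ a) - u₁ * (1 - u₁ ^ a))
    (v₂ * (1 - v₂ ^ b) - v₁ * (1 - v₁ ^ b)) a b θ
    (by linarith) (by linarith) ha hb hFu.1 hFu.2 hGv.1 hGv.2 hta htb ht3 ht4
  have hkey : ∀ u v : ℝ, C u v = u * v + θ * (u * (1 - u ^ a)) * (v * (1 - v ^ b)) := by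
    intro u v; rw [hC]; ring
  rw [hkey, hkey, hkey, hkey]
  nlinarith [hcore]
end

section
/- Fix d ≥ 2, let μ be a Borel probability measure on [0,1] with mean p = ∫₀¹ λ dμ(λ) ∈ (0,1), and define the exchangeable Bernoulli pmf f(i) = ∫₀¹ λ^{i₁+⋯+i_d}·(1-λ)^{d-(i₁+⋯+i_d)} dμ(λ) for i ∈ {0,1}^d. Then for all u ∈ [0,1]^d, the corresponding GFGM copula satisfies C_f(u) = Σ_{i∈{0,1}^d} f(i)·Π_{m=1}^d ( u_m^{1/(1-p)} - i_m( u_m^{1/(1-p)} - u_m )/p ) = ∫₀¹ Π_{m=1}^d ( u_m^{1/(1-p)} - (λ/p)·( u_m^{1/(1-p)} - u_m ) ) dμ(λ). -/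
open MeasureTheory ProbabilityTheory Set

/-!
Given the mixing value `λ`, the Bernoulli vector is i.i.d. Bernoulli(`λ`), so its pmf is a
product and the multilinear sum over `{0,1}^d` factors coordinatewise into
`Π_m ((1-λ)·g_m(0) + λ·g_m(1))`, whose factors are exactly
`u_m^{1/(1-p)} - (λ/p)(u_m^{1/(1-p)} - u_m)`. The integral against `μ` commutes with the
finite sum since every weight `λ^k (1-λ)^{d-k}` is bounded on `[0,1]`, which carries all
of `μ`.
-/

theorem prod_one_sub_mul_add_mul_eq_sum {ι R : Type*} [Fintype ι] [DecidableEq ι]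
    [CommRing R] (x : R) (g : ι → Bool → R) :
    ∏ m, ((1 - x) * g m false + x * g m true)
      = ∑ i : ι → Bool,
          x ^ (Finset.univ.filter fun m => i m = true).card *
            (1 - x) ^ (Fintype.card ι - (Finset.univ.filter fun m => i m = true).card) *
          ∏ m, g m (i m) := by
  have hfactor : ∀ m, (1 - x) * g m false + x * g m true
      = ∑ b : Bool, (if b = true then x else 1 - x) * g m b := fun m => by
    simp only [Fintype.sum_bool, if_true, Bool.false_eq_true, if_false, add_comm]
  simp_rw [hfactor, Fintype.prod_sum, Finset.prod_mul_distrib, Finset.prod_ite,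
    Finset.prod_const, Finset.filter_not, Finset.card_sdiff_of_subset (Finset.filter_subset _ _),
    Finset.card_univ]

theorem integrable_pow_mul_one_sub_pow {μ : Measure ℝ} [IsFiniteMeasure μ]
    (hμ : ∀ᵐ x ∂μ, x ∈ Icc (0 : ℝ) 1) (k n : ℕ) :
    Integrable (fun x : ℝ => x ^ k * (1 - x) ^ n) μ := by
  refine Integrable.mono' (integrable_const 1) (by fun_prop) ?_
  filter_upwards [hμ] with x ⟨hx0, hx1⟩
  rw [norm_mul, norm_pow, norm_pow, Real.norm_of_nonneg hx0,
    Real.norm_of_nonneg (sub_nonneg.2 hx1)]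
  exact mul_le_one₀ (pow_le_one₀ hx0 hx1) (by positivity)
    (pow_le_one₀ (sub_nonneg.2 hx1) (by linarith))

theorem gfgm_exchangeable_mixture_general
    (d : ℕ)
    (μ : Measure ℝ) [IsProbabilityMeasure μ] (hsupp : μ (Icc (0 : ℝ) 1) = 1)
    (p : ℝ)
    (f : (Fin d → Bool) → ℝ)
    (hf : ∀ i, f i = ∫ x,
      x ^ (Finset.univ.filter fun m => i m = true).card *
        (1 - x) ^ (d - (Finset.univ.filter fun m => i m = true).card) ∂μ)
    (u : Fin d → ℝ) :
    ∑ i : Fin d → Bool,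
        f i * ∏ m, (u m ^ (1 - p)⁻¹ - bval (i m) * ((u m ^ (1 - p)⁻¹ - u m) / p))
      = ∫ x, ∏ m, (u m ^ (1 - p)⁻¹ - (x / p) * (u m ^ (1 - p)⁻¹ - u m)) ∂μ := by
  have hμ : ∀ᵐ x ∂μ, x ∈ Icc (0 : ℝ) 1 :=
    (ae_mem_iff_measure_eq measurableSet_Icc.nullMeasurableSet).2 (by rw [hsupp, measure_univ])
  simp_rw [hf, ← integral_mul_const]
  rw [← integral_finsetSum _ fun i _ => (integrable_pow_mul_one_sub_pow hμ _ _).mul_const _]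
  congr 1 with x
  have hexpand := prod_one_sub_mul_add_mul_eq_sum x
    fun m b => u m ^ (1 - p)⁻¹ - bval b * ((u m ^ (1 - p)⁻¹ - u m) / p)
  simp only [Fintype.card_fin] at hexpand
  rw [← hexpand]
  refine Finset.prod_congr rfl fun m _ => ?_
  simp only [bval, if_true, Bool.false_eq_true, if_false]
  ring

/-- De Finetti mixture construction of exchangeable GFGM copulas: if the exchangeable
Bernoulli pmf is `f(i) = ∫₀¹ λ^{#ones(i)} (1-λ)^{d - #ones(i)} dμ(λ)` for a mixing
probability measure `μ` on `[0,1]` with mean `p ∈ (0,1)`, then for all `u ∈ [0,1]^d` the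
GFGM copula equals
`∫₀¹ Π_m (u_m^{1/(1-p)} - (λ/p)(u_m^{1/(1-p)} - u_m)) dμ(λ)`. -/
theorem gfgm_exchangeable_mixture
    (d : ℕ) (hd : 2 ≤ d)
    (μ : Measure ℝ) [IsProbabilityMeasure μ] (hsupp : μ (Icc (0 : ℝ) 1) = 1)
    (p : ℝ) (hpdef : p = ∫ x, x ∂μ) (hp : p ∈ Ioo (0 : ℝ) 1)
    (f : (Fin d → Bool) → ℝ)
    (hf : ∀ i, f i = ∫ x,
      x ^ (Finset.univ.filter fun m => i m = true).card *
        (1 - x) ^ (d - (Finset.univ.filter fun m => i m = true).card) ∂μ)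
    (u : Fin d → ℝ) (hu : ∀ m, u m ∈ Icc (0 : ℝ) 1) :
    ∑ i : Fin d → Bool,
        f i * ∏ m, (u m ^ (1 - p)⁻¹ - bval (i m) * ((u m ^ (1 - p)⁻¹ - u m) / p))
      = ∫ x, ∏ m, (u m ^ (1 - p)⁻¹ - (x / p) * (u m ^ (1 - p)⁻¹ - u m)) ∂μ :=
  gfgm_exchangeable_mixture_general d μ hsupp p f hf u
end
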